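/- arXiv:2011.14360 — 6 statements merged into one kernel-verified Lean document; each statement's English description precedes it below -/
import Mathlib

section
/- For all integers k ≥ 2, n ≥ 1 and m with 1 ≤ m ≤ n+k, the parametrized k-descent-avoiding counts satisfy the recurrence f_k(m, n+k) = f_k(n+k-1) − ( Σ_{u=1}^{n} f_k(u,n)·C(m-1, k-1) − Σ_{u=1}^{min(m-1, n)} f_k(u,n)·C(m-1-u, k-1) ), where C(a,b) denotes the binomial coefficient (equal to 0 when b > a). -/
/-!
Write `k = K + 1`. Deleting the first entry `m` of a permutation of `{1, …, n+k}` and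
standardising the rest is a bijection onto `S_{n+K}`; the permutation avoids `k`-descents iff
the remainder `v` does and `v` does not begin with a decreasing run of `K` entries below `m`.
Such a "bad" `v` is determined by the set `S` of its first `K` values, a `K`-subset of
`{1, …, m-1}` listed decreasingly, and by the pattern `t ∈ S_n` of its remaining entries. It
avoids `k`-descents iff `t` does and the run stops after `K` entries, i.e. `min S` lies below the
next entry, which happens iff `S` meets `{1, …, t(1)}`. For `t(1) = u` this leaves
`C(m-1, K) - C(m-1-u, K)` choices of `S`.
-/

/-- The value `w(i)` (1-based, taking values in `{1,...,n}`) of a permutation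
`w ∈ S_n`, with the convention `w(i) = 0` for `i` out of range. -/
def permVal (n : ℕ) (w : Equiv.Perm (Fin n)) (i : ℕ) : ℕ :=
  if h : i - 1 < n then (w ⟨i - 1, h⟩ : ℕ) + 1 else 0

/-- The set of starting indices (1-based) of `k`-descents of `w ∈ S_n`:
indices `i` with `1 ≤ i ≤ n - k + 1` such that `w(i) > w(i+1) > ⋯ > w(i+k-1)`. -/
def kDescentSet (k n : ℕ) (w : Equiv.Perm (Fin n)) : Finset ℕ :=
  (Finset.Icc 1 (n + 1 - k)).filter
    (fun i => ∀ j < k - 1, permVal n w (i + j + 1) < permVal n w (i + j))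

/-- `d_k(I,n)`: the number of permutations of `S_n` whose `k`-descent set is `I`. -/
def dI (k n : ℕ) (I : Finset ℕ) : ℕ :=
  (Finset.univ.filter (fun w : Equiv.Perm (Fin n) => kDescentSet k n w = I)).card

/-- `d_k(I,m,n)`: as `d_k(I,n)` but additionally requiring `w(1) = m`. -/
def dIm (k : ℕ) (I : Finset ℕ) (m n : ℕ) : ℕ :=
  (Finset.univ.filter
    (fun w : Equiv.Perm (Fin n) => kDescentSet k n w = I ∧ permVal n w 1 = m)).card

/-- `f_k(n) = d_k(∅, n)`, the number of `k`-descent-avoiding permutations in `S_n`. -/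
def fK (k n : ℕ) : ℕ := dI k n ∅

/-- `f_k(m,n) = d_k(∅, m, n)`. -/
def fKm (k m n : ℕ) : ℕ := dIm k ∅ m n

open Finset Equiv

section DecreasingRuns

variable {α : Type*} [LT α]

def IsDecreasingRun (a : ℕ → α) (i r : ℕ) : Prop :=
  ∀ j < r, a (i + j + 1) < a (i + j)

instance [DecidableLT α] (a : ℕ → α) (i r : ℕ) : Decidable (IsDecreasingRun a i r) := by
  unfold IsDecreasingRun; infer_instance

/-- Positions are `1, …, L`, matching the 1-based `permVal`. -/
def AvoidsDecreasingRun (a : ℕ → α) (L r : ℕ) : Prop :=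
  ∀ i, 1 ≤ i → i + r ≤ L → ¬ IsDecreasingRun a i r

variable {a : ℕ → α} {i r L : ℕ}

theorem isDecreasingRun_succ_iff :
    IsDecreasingRun a i (r + 1) ↔ a (i + 1) < a i ∧ IsDecreasingRun a (i + 1) r := by
  simp only [IsDecreasingRun, Nat.forall_lt_succ_left, add_zero, Nat.add_right_comm _ 1,
    ← Nat.add_assoc]

theorem isDecreasingRun_succ_iff' :
    IsDecreasingRun a i (r + 1) ↔ IsDecreasingRun a i r ∧ a (i + r + 1) < a (i + r) := by
  simp only [IsDecreasingRun, Nat.forall_lt_succ_right]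

theorem isDecreasingRun_shift {s : ℕ} :
    IsDecreasingRun (fun j => a (j + s)) i r ↔ IsDecreasingRun a (i + s) r := by
  simp only [IsDecreasingRun, Nat.add_right_comm _ s]

theorem isDecreasingRun_congr {β : Type*} [LT β] {b : ℕ → β}
    (h : ∀ j < r, (a (i + j + 1) < a (i + j) ↔ b (i + j + 1) < b (i + j))) :
    IsDecreasingRun a i r ↔ IsDecreasingRun b i r :=
  forall₂_congr h

theorem avoidsDecreasingRun_congr {β : Type*} [LT β] {b : ℕ → β}
    (h : ∀ i, 1 ≤ i → i < L → (a (i + 1) < a i ↔ b (i + 1) < b i)) :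
    AvoidsDecreasingRun a L r ↔ AvoidsDecreasingRun b L r :=
  forall₃_congr fun i hi hiL => not_congr <| isDecreasingRun_congr fun j hj =>
    h (i + j) (by omega) (by omega)

theorem avoidsDecreasingRun_succ_iff :
    AvoidsDecreasingRun a (L + 1) r ↔
      (r ≤ L → ¬ IsDecreasingRun a 1 r) ∧ AvoidsDecreasingRun (fun i => a (i + 1)) L r := by
  simp only [AvoidsDecreasingRun, isDecreasingRun_shift]
  constructor
  · exact fun h => ⟨fun hr => h 1 le_rfl (by omega),
      fun i hi hiL => h (i + 1) (by omega) (by omega)⟩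
  · rintro ⟨hhead, htail⟩ i hi hiL
    obtain rfl | hi := hi.eq_or_lt
    · exact hhead (by omega)
    · simpa [Nat.sub_add_cancel hi.le] using htail (i - 1) (by omega) (by omega)

/-- Every run starting in `1, …, r` contains the step from `a r` to `a (r + 1)`. -/
theorem avoidsDecreasingRun_add_iff (hr : 0 < r) (hL : 0 < L)
    (ha : IsDecreasingRun a 1 (r - 1)) :
    AvoidsDecreasingRun a (L + r) r ↔
      ¬ a (r + 1) < a r ∧ AvoidsDecreasingRun (fun i => a (i + r)) L r := by
  simp only [AvoidsDecreasingRun, isDecreasingRun_shift]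
  constructor
  · refine fun h => ⟨fun hlt => h 1 le_rfl (by omega) ?_,
      fun i hi hiL => h (i + r) (by omega) (by omega)⟩
    obtain ⟨s, rfl⟩ : ∃ s, r = s + 1 := ⟨r - 1, by omega⟩
    exact isDecreasingRun_succ_iff'.2 ⟨ha, by simpa [Nat.add_comm 1 s] using hlt⟩
  · rintro ⟨hjunction, htail⟩ i hi hiL hrun
    by_cases hir : i ≤ r
    · exact hjunction (by simpa [show i + (r - i) = r by omega] using hrun (r - i) (by omega))
    · exact htail (i - r) (by omega) (by omega) (by rwa [Nat.sub_add_cancel (by omega)])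

end DecreasingRuns

theorem IsDecreasingRun.strictAntiOn {α : Type*} [Preorder α] {a : ℕ → α} {i r : ℕ}
    (ha : IsDecreasingRun a i r) : StrictAntiOn a (Set.Icc i (i + r)) := by
  have hanti : StrictAntiOn (fun j => a (i + j)) (Set.Iic r) :=
    strictAntiOn_Iic_of_succ_lt fun j hj => by simpa [Nat.add_assoc] using ha j hj
  rintro x ⟨hix, hxr⟩ y ⟨hiy, hyr⟩ hxy
  simpa [Nat.add_sub_cancel' hix, Nat.add_sub_cancel' hiy] using
    hanti (a := x - i) (b := y - i) (by simp; omega) (by simp; omega) (by omega)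

theorem permVal_succ {n : ℕ} (w : Perm (Fin n)) {i : ℕ} (hi : i < n) :
    permVal n w (i + 1) = w ⟨i, hi⟩ + 1 := by
  simp [permVal, hi]

theorem kDescentSet_eq_empty_iff {r n : ℕ} (w : Perm (Fin n)) :
    kDescentSet (r + 1) n w = ∅ ↔ AvoidsDecreasingRun (permVal n w) n r := by
  simp only [kDescentSet, filter_eq_empty_iff, mem_Icc, Nat.add_sub_cancel]
  exact forall_congr' fun i =>
    ⟨fun h hi hin => h ⟨hi, by omega⟩, fun h hi => h hi.1 (by omega)⟩

/-- Putting `m` in front of such a `v` creates a `(K+1)`-descent. -/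
def HeadRunBelow (K m : ℕ) {N : ℕ} (v : Perm (Fin N)) : Prop :=
  permVal N v 1 < m ∧ IsDecreasingRun (permVal N v) 1 (K - 1)

instance (K m N : ℕ) (v : Perm (Fin N)) : Decidable (HeadRunBelow K m v) := by
  unfold HeadRunBelow; infer_instance

section Insert

variable {N : ℕ}

noncomputable def insertPerm (p : Fin (N + 1)) (v : Perm (Fin N)) : Perm (Fin (N + 1)) :=
  Equiv.ofBijective (Fin.cons p (p.succAbove ∘ v)) <| Finite.injective_iff_bijective.1 <|
    Fin.cons_injective_iff.2 ⟨by simp, Fin.succAbove_right_injective.comp v.injective⟩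

theorem insertPerm_zero (p : Fin (N + 1)) (v : Perm (Fin N)) : insertPerm p v 0 = p := rfl

theorem insertPerm_succ (p : Fin (N + 1)) (v : Perm (Fin N)) (i : Fin N) :
    insertPerm p v i.succ = p.succAbove (v i) := rfl

theorem insertPerm_injective :
    Function.Injective (fun pv : Fin (N + 1) × Perm (Fin N) => insertPerm pv.1 pv.2) := by
  rintro ⟨p, v⟩ ⟨q, u⟩ h
  obtain rfl : p = q := by simpa only [insertPerm_zero] using Equiv.ext_iff.1 h 0
  refine Prod.ext rfl (Equiv.ext fun i => ?_)
  simpa only [insertPerm_succ, Fin.succAbove_right_inj] using Equiv.ext_iff.1 h i.succ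

theorem exists_insertPerm_eq (w : Perm (Fin (N + 1))) : ∃ p v, insertPerm p v = w := by
  have hbij := Fintype.bijective_iff_injective_and_card _ |>.2 ⟨insertPerm_injective (N := N), by
    simp [Fintype.card_perm, Nat.factorial_succ]⟩
  obtain ⟨⟨p, v⟩, hpv⟩ := hbij.2 w
  exact ⟨p, v, hpv⟩

variable (p : Fin (N + 1)) (v : Perm (Fin N))

theorem permVal_insertPerm_one : permVal (N + 1) (insertPerm p v) 1 = p + 1 :=
  permVal_succ _ (Nat.succ_pos N)

theorem permVal_insertPerm_succ_lt_iff {i j : ℕ} (hi : 1 ≤ i) (hiN : i ≤ N) (hj : 1 ≤ j)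
    (hjN : j ≤ N) :
    permVal (N + 1) (insertPerm p v) (i + 1) < permVal (N + 1) (insertPerm p v) (j + 1) ↔
      permVal N v i < permVal N v j := by
  obtain ⟨i, rfl⟩ : ∃ i', i = i' + 1 := ⟨i - 1, by omega⟩
  obtain ⟨j, rfl⟩ : ∃ j', j = j' + 1 := ⟨j - 1, by omega⟩
  rw [permVal_succ _ (by omega : i + 1 < N + 1), permVal_succ _ (by omega : j + 1 < N + 1),
    permVal_succ _ hiN, permVal_succ _ hjN]
  simp only [Nat.add_lt_add_iff_right, ← Fin.lt_def]
  exact (Fin.strictMono_succAbove p).lt_iff_lt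

theorem permVal_insertPerm_two_lt_iff (hN : 0 < N) :
    permVal (N + 1) (insertPerm p v) 2 < p + 1 ↔ permVal N v 1 < p + 1 := by
  rw [permVal_succ _ (by omega : 1 < N + 1), permVal_succ _ hN, Nat.add_lt_add_iff_right,
    Nat.add_lt_add_iff_right, ← Fin.lt_def]
  exact Fin.succAbove_lt_iff_castSucc_lt p _

theorem kDescentSet_insertPerm_eq_empty_iff {K : ℕ} (hK : 0 < K) (hKN : K ≤ N) :
    kDescentSet (K + 1) (N + 1) (insertPerm p v) = ∅ ↔
      kDescentSet (K + 1) N v = ∅ ∧ ¬ HeadRunBelow K (p + 1) v := by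
  have hsucc_lt_iff : ∀ i, 1 ≤ i → i < N →
      (permVal (N + 1) (insertPerm p v) (i + 1 + 1) <
          permVal (N + 1) (insertPerm p v) (i + 1) ↔ permVal N v (i + 1) < permVal N v i) :=
    fun i hi hiN =>
    permVal_insertPerm_succ_lt_iff p v (by omega) (by omega) hi hiN.le
  obtain ⟨s, rfl⟩ : ∃ s, K = s + 1 := ⟨K - 1, by omega⟩
  rw [kDescentSet_eq_empty_iff, kDescentSet_eq_empty_iff, avoidsDecreasingRun_succ_iff, and_comm,
    avoidsDecreasingRun_congr hsucc_lt_iff, imp_iff_right hKN, isDecreasingRun_succ_iff,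
    HeadRunBelow, permVal_insertPerm_one, Nat.add_sub_cancel,
    permVal_insertPerm_two_lt_iff p v (by omega), ← isDecreasingRun_shift (s := 1),
    isDecreasingRun_congr fun j hj => hsucc_lt_iff (1 + j) (by omega) (by omega)]

end Insert

theorem fKm_add_card_headRunBelow {K N : ℕ} (hK : 0 < K) (hKN : K ≤ N) (p : Fin (N + 1)) :
    fKm (K + 1) (p + 1) (N + 1) +
        #{v : Perm (Fin N) | kDescentSet (K + 1) N v = ∅ ∧ HeadRunBelow K (p + 1) v} =
      fK (K + 1) N := by
  have hfKm : #{v : Perm (Fin N) | kDescentSet (K + 1) N v = ∅ ∧ ¬ HeadRunBelow K (p + 1) v} =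
      fKm (K + 1) (p + 1) (N + 1) := by
    refine card_bij (fun v _ => insertPerm p v) (fun v hv => ?_) (fun a _ b _ h => ?_)
      (fun w hw => ?_)
    · simp only [mem_filter, mem_univ, true_and] at hv ⊢
      exact ⟨(kDescentSet_insertPerm_eq_empty_iff p v hK hKN).2 hv, permVal_insertPerm_one p v⟩
    · exact congrArg Prod.snd (insertPerm_injective (a₁ := (p, a)) (a₂ := (p, b)) h)
    · simp only [mem_filter, mem_univ, true_and] at hw ⊢
      obtain ⟨q, v, rfl⟩ := exists_insertPerm_eq w
      obtain rfl : q = p := Fin.ext (by simpa [permVal_insertPerm_one] using hw.2)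
      exact ⟨v, (kDescentSet_insertPerm_eq_empty_iff q v hK hKN).1 hw.1, rfl⟩
  rw [fK, dI, ← card_filter_add_card_filter_not (p := HeadRunBelow K (p + 1))
    (s := {w : Perm (Fin N) | kDescentSet (K + 1) N w = ∅}), filter_filter, filter_filter,
    ← hfKm, add_comm]

theorem val_le_apply_of_strictMono {a b : ℕ} {g : Fin a → Fin b} (hg : StrictMono g)
    (i : Fin a) : (i : ℕ) ≤ g i :=
  calc (i : ℕ) = #(Iio i) := (Fin.card_Iio i).symm
    _ ≤ #(Iio (g i)) :=
        card_le_card_of_injOn g (fun x hx => by simpa using hg (by simpa using hx))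
          hg.injective.injOn
    _ = g i := Fin.card_Iio _

section Complement

variable {N n : ℕ} {S : Finset (Fin N)} (hSc : #Sᶜ = n)

/-- `0, …, j` all lie in `Sᶜ`, so they are its `j + 1` smallest elements. -/
theorem orderEmbOfFin_compl_le {j : Fin n} (hS : ∀ x ∈ S, (j : ℕ) < x) :
    (Sᶜ.orderEmbOfFin hSc j : ℕ) ≤ j := by
  have hjN : (j : ℕ) < N := by
    have := card_le_univ Sᶜ
    simp only [hSc, Fintype.card_fin] at this
    omega
  have hmem : ∀ a ≤ (j : ℕ), ∀ ha : a < N, (⟨a, ha⟩ : Fin N) ∈ Sᶜ := fun a ha haN =>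
    mem_compl.2 fun haS => (hS _ haS).not_ge ha
  let g : Fin (j + 1) → Fin n := fun a =>
    (Sᶜ.orderIsoOfFin hSc).symm ⟨⟨a, by omega⟩, hmem a (by omega) _⟩
  have hg : StrictMono g := fun a b hab => (Sᶜ.orderIsoOfFin hSc).symm.strictMono hab
  have hjg : j ≤ g (Fin.last j) := Fin.le_def.2 (val_le_apply_of_strictMono hg (Fin.last j))
  calc (Sᶜ.orderEmbOfFin hSc j : ℕ) ≤ Sᶜ.orderEmbOfFin hSc (g (Fin.last j)) :=
        (Sᶜ.orderEmbOfFin hSc).monotone hjg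
    _ = j := by simp [g, ← coe_orderIsoOfFin_apply]

theorem orderEmbOfFin_compl_lt_min'_iff (hne : S.Nonempty) (j : Fin n) :
    Sᶜ.orderEmbOfFin hSc j < S.min' hne ↔ ∀ x ∈ S, (j : ℕ) < x := by
  refine ⟨fun h x hx => ?_, fun h => ?_⟩
  · have := val_le_apply_of_strictMono (Sᶜ.orderEmbOfFin hSc).strictMono j
    have := S.min'_le x hx
    rw [Fin.lt_def] at h
    rw [Fin.le_def] at this
    omega
  · rw [Fin.lt_def]
    exact (orderEmbOfFin_compl_le hSc h).trans_lt (h _ (S.min'_mem hne))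

end Complement

section HeadTail

variable {n K : ℕ}

theorem card_compl_eq_of_card_eq {S : Finset (Fin (n + K))} (hS : #S = K) : #Sᶜ = n := by
  rw [card_compl, Fintype.card_fin, hS, Nat.add_sub_cancel]

/-- The permutation listing `S` decreasingly in positions `0, …, K-1`, followed by `Sᶜ` arranged
in the relative order of `t`. -/
noncomputable def headTailPerm (S : Finset (Fin (n + K))) (hS : #S = K) (t : Perm (Fin n)) :
    Perm (Fin (n + K)) :=
  Equiv.ofBijective _ <| Finite.injective_iff_bijective.1 <|
    Function.Injective.dite (fun x : Fin (n + K) => (x : ℕ) < K)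
      (f := fun x => S.orderEmbOfFin hS ⟨K - 1 - x.1, by have := x.2; omega⟩)
      (f' := fun x => Sᶜ.orderEmbOfFin (card_compl_eq_of_card_eq hS)
        (t ⟨x.1 - K, by have := x.1.isLt; omega⟩))
      (fun x y h => by
        have := congrArg Fin.val ((S.orderEmbOfFin hS).injective h)
        have := x.2; have := y.2
        exact Subtype.ext (Fin.ext (by simp at *; omega)))
      (fun x y h => by
        have := congrArg Fin.val (t.injective ((Sᶜ.orderEmbOfFin _).injective h))
        have := x.2; have := y.2
        exact Subtype.ext (Fin.ext (by simp at *; omega)))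
      (fun h => mem_compl.1 (orderEmbOfFin_mem _ _ _) (h ▸ orderEmbOfFin_mem _ _ _))

variable (S : Finset (Fin (n + K))) (hS : #S = K) (t : Perm (Fin n))

theorem headTailPerm_apply_of_lt {x : Fin (n + K)} (hx : (x : ℕ) < K) :
    headTailPerm S hS t x = S.orderEmbOfFin hS ⟨K - 1 - x, by omega⟩ := by
  simp [headTailPerm, hx]

theorem headTailPerm_apply_of_le {x : Fin (n + K)} (hx : K ≤ (x : ℕ)) :
    headTailPerm S hS t x =
      Sᶜ.orderEmbOfFin (card_compl_eq_of_card_eq hS) (t ⟨x - K, by omega⟩) := by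
  simp [headTailPerm, hx.not_gt]

theorem permVal_headTailPerm_succ {i : ℕ} (hi : i < K) :
    permVal (n + K) (headTailPerm S hS t) (i + 1) =
      S.orderEmbOfFin hS ⟨K - 1 - i, by omega⟩ + 1 := by
  rw [permVal_succ _ (by omega), headTailPerm_apply_of_lt _ _ _ hi]

theorem permVal_headTailPerm_add {i : ℕ} (hi : 1 ≤ i) (hin : i ≤ n) :
    permVal (n + K) (headTailPerm S hS t) (i + K) =
      Sᶜ.orderEmbOfFin (card_compl_eq_of_card_eq hS) (t ⟨i - 1, by omega⟩) + 1 := by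
  obtain ⟨i, rfl⟩ : ∃ i', i = i' + 1 := ⟨i - 1, by omega⟩
  rw [Nat.add_right_comm, permVal_succ _ (by omega), headTailPerm_apply_of_le _ _ _ (by simp)]
  simp

theorem isDecreasingRun_headTailPerm :
    IsDecreasingRun (permVal (n + K) (headTailPerm S hS t)) 1 (K - 1) := by
  intro j hj
  rw [Nat.add_comm 1 j, permVal_headTailPerm_succ _ _ _ (by omega),
    permVal_headTailPerm_succ _ _ _ (by omega), Nat.add_lt_add_iff_right, Fin.val_fin_lt,
    OrderEmbedding.lt_iff_lt, Fin.mk_lt_mk]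
  omega

theorem kDescentSet_headTailPerm_eq_empty_iff (hK : 0 < K) (hn : 0 < n) :
    kDescentSet (K + 1) (n + K) (headTailPerm S hS t) = ∅ ↔
      kDescentSet (K + 1) n t = ∅ ∧ ∃ x ∈ S, (x : ℕ) < permVal n t 1 := by
  have hne : S.Nonempty := card_pos.1 (hS.symm ▸ hK)
  have htail : ∀ i, 1 ≤ i → i < n →
      (permVal (n + K) (headTailPerm S hS t) (i + 1 + K) <
          permVal (n + K) (headTailPerm S hS t) (i + K) ↔
        permVal n t (i + 1) < permVal n t i) := by
    intro i hi hin
    obtain ⟨i, rfl⟩ : ∃ i', i = i' + 1 := ⟨i - 1, by omega⟩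
    rw [permVal_headTailPerm_add _ _ _ (by omega) hin, permVal_headTailPerm_add _ _ _ hi hin.le,
      permVal_succ _ hin, permVal_succ _ (by omega)]
    simp
  have hjunction : permVal (n + K) (headTailPerm S hS t) (K + 1) <
      permVal (n + K) (headTailPerm S hS t) K ↔ ∀ x ∈ S, (permVal n t 1 : ℕ) ≤ x := by
    have hmin : permVal (n + K) (headTailPerm S hS t) K = S.min' hne + 1 := by
      have := permVal_headTailPerm_succ S hS t (i := K - 1) (by omega)
      simp_rw [Nat.sub_add_cancel hK, Nat.sub_self, orderEmbOfFin_zero hS hK] at this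
      exact this
    have hfirst : permVal n t 1 = t ⟨0, hn⟩ + 1 := permVal_succ t hn
    rw [Nat.add_comm K 1, permVal_headTailPerm_add _ _ _ le_rfl hn, hmin, hfirst,
      Nat.add_lt_add_iff_right, ← Fin.lt_def, orderEmbOfFin_compl_lt_min'_iff]
    exact forall₂_congr fun x _ => Nat.lt_iff_add_one_le
  rw [kDescentSet_eq_empty_iff, kDescentSet_eq_empty_iff,
    avoidsDecreasingRun_add_iff hK hn (isDecreasingRun_headTailPerm S hS t),
    avoidsDecreasingRun_congr htail, hjunction, and_comm]
  simp only [not_forall, not_le, exists_prop]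

theorem headRunBelow_headTailPerm_iff {m : ℕ} (hK : 0 < K) :
    HeadRunBelow K m (headTailPerm S hS t) ↔ ∀ x ∈ S, (x : ℕ) < m - 1 := by
  have hne : S.Nonempty := card_pos.1 (hS.symm ▸ hK)
  have hmax : permVal (n + K) (headTailPerm S hS t) 1 = S.max' hne + 1 := by
    rw [permVal_headTailPerm_succ S hS t (i := 0) hK]
    simp_rw [Nat.sub_zero, orderEmbOfFin_last hS hK]
  rw [HeadRunBelow, and_iff_left (isDecreasingRun_headTailPerm S hS t), hmax]
  refine ⟨fun h x hx => ?_, fun h => ?_⟩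
  · have := S.le_max' x hx
    rw [Fin.le_def] at this
    omega
  · have := h _ (S.max'_mem hne)
    omega

end HeadTail

theorem mem_iff_headTailPerm_symm_lt {n K : ℕ} {S : Finset (Fin (n + K))} (hS : #S = K)
    (t : Perm (Fin n)) (x : Fin (n + K)) :
    x ∈ S ↔ ((headTailPerm S hS t).symm x : ℕ) < K := by
  obtain ⟨y, rfl⟩ := (headTailPerm S hS t).surjective x
  rw [Equiv.symm_apply_apply]
  by_cases hy : (y : ℕ) < K
  · simp [hy, headTailPerm_apply_of_lt S hS t hy]
  · simpa [hy, headTailPerm_apply_of_le S hS t (not_lt.1 hy)] using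
      mem_compl.1 (orderEmbOfFin_mem Sᶜ _ _)

theorem headTailPerm_inj {n K : ℕ} {S S' : Finset (Fin (n + K))} {hS : #S = K}
    {hS' : #S' = K} {t t' : Perm (Fin n)} (h : headTailPerm S hS t = headTailPerm S' hS' t') :
    S = S' ∧ t = t' := by
  obtain rfl : S = S' := by
    ext x
    rw [mem_iff_headTailPerm_symm_lt hS t, mem_iff_headTailPerm_symm_lt hS' t', h]
  refine ⟨rfl, Equiv.ext fun i => ?_⟩
  have hK : K ≤ ((⟨i + K, by omega⟩ : Fin (n + K)) : ℕ) := Nat.le_add_left K i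
  have := Equiv.ext_iff.1 h ⟨i + K, by omega⟩
  simpa [headTailPerm_apply_of_le S hS _ hK] using this

theorem orderEmbOfFin_image_eq_of_isDecreasingRun {n K : ℕ} {v : Perm (Fin (n + K))}
    (hv : IsDecreasingRun (permVal (n + K) v) 1 (K - 1))
    (hS : #(univ.image fun j : Fin K => v (Fin.castLE (by omega) j)) = K) :
    ⇑((univ.image fun j : Fin K => v (Fin.castLE (by omega) j)).orderEmbOfFin hS) =
      fun j : Fin K => v ⟨K - 1 - j, by omega⟩ := by
  refine (orderEmbOfFin_unique hS (f := fun j : Fin K => v ⟨K - 1 - j, by omega⟩)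
    (fun j => mem_image.2 ⟨⟨K - 1 - j, by omega⟩, mem_univ _, rfl⟩)
    fun j j' hjj' => ?_).symm
  rw [Fin.lt_def] at hjj'
  have := hv.strictAntiOn
    (show K - (j' : ℕ) ∈ Set.Icc 1 (1 + (K - 1)) from ⟨by omega, by omega⟩)
    (show K - (j : ℕ) ∈ Set.Icc 1 (1 + (K - 1)) from ⟨by omega, by omega⟩) (by omega)
  rw [show K - (j' : ℕ) = K - 1 - j' + 1 by omega, show K - (j : ℕ) = K - 1 - j + 1 by omega,
    permVal_succ _ (by omega), permVal_succ _ (by omega)] at this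
  beta_reduce
  exact Fin.lt_def.2 (by omega)

theorem exists_headTailPerm_eq {n K : ℕ} {v : Perm (Fin (n + K))}
    (hv : IsDecreasingRun (permVal (n + K) v) 1 (K - 1)) :
    ∃ S hS t, headTailPerm S hS t = v := by
  set S : Finset (Fin (n + K)) := univ.image fun j : Fin K => v (Fin.castLE (by omega) j)
  have hS : #S = K := by
    rw [card_image_of_injective _ fun j j' h => Fin.castLE_injective _ (v.injective h)]
    simp
  have hSc := card_compl_eq_of_card_eq hS
  have hhead := orderEmbOfFin_image_eq_of_isDecreasingRun hv hS
  have htail_mem : ∀ i : Fin n, v ⟨i + K, by omega⟩ ∈ Sᶜ := by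
    intro i
    simp only [S, mem_compl, mem_image, mem_univ, true_and, not_exists]
    intro j hj
    have := congrArg Fin.val (v.injective hj)
    simp at this
    omega
  let u : Fin n → Fin n := fun i => (Sᶜ.orderIsoOfFin hSc).symm ⟨_, htail_mem i⟩
  have hu : u.Injective := fun i i' h => by
    have := v.injective (congrArg Subtype.val ((Sᶜ.orderIsoOfFin hSc).symm.injective h))
    exact Fin.ext (by simpa using this)
  refine ⟨S, hS, Equiv.ofBijective u (Finite.injective_iff_bijective.1 hu),
    Equiv.ext fun x => ?_⟩
  by_cases hx : (x : ℕ) < K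
  · rw [headTailPerm_apply_of_lt _ _ _ hx, hhead]
    exact congrArg v (Fin.ext (by simp; omega))
  · rw [headTailPerm_apply_of_le _ _ _ (not_lt.1 hx)]
    simp only [Equiv.ofBijective_apply, u, ← coe_orderIsoOfFin_apply, OrderIso.apply_symm_apply]
    exact congrArg v (Fin.ext (by simp; omega))

theorem card_filter_not_disjoint_powersetCard {α : Type*} [DecidableEq α] (A B : Finset α)
    (K : ℕ) :
    #{S ∈ A.powersetCard K | ¬ Disjoint S B} = (#A).choose K - (#(A \ B)).choose K := by
  have hdisj : {S ∈ A.powersetCard K | Disjoint S B} = (A \ B).powersetCard K := by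
    ext S
    simp [mem_powersetCard, subset_sdiff, and_right_comm]
  have := card_filter_add_card_filter_not (s := A.powersetCard K) (fun S => Disjoint S B)
  rw [hdisj, card_powersetCard, card_powersetCard] at this
  omega

theorem card_avoiding_headRunBelow_eq_sum {n K m : ℕ} (hK : 0 < K) (hn : 0 < n) :
    #{v : Perm (Fin (n + K)) | kDescentSet (K + 1) (n + K) v = ∅ ∧ HeadRunBelow K m v} =
      ∑ t ∈ {t : Perm (Fin n) | kDescentSet (K + 1) n t = ∅},
        #{S ∈ ({x | (x : ℕ) < m - 1} : Finset (Fin (n + K))).powersetCard K |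
          ¬ Disjoint S ({x | (x : ℕ) < permVal n t 1} : Finset (Fin (n + K)))} := by
  rw [← card_sigma]
  symm
  refine card_bij (fun tS h => headTailPerm tS.2
    (mem_powersetCard.1 (mem_filter.1 (mem_sigma.1 h).2).1).2 tS.1) ?_ ?_ ?_
  · rintro ⟨t, S⟩ h
    simp only [mem_sigma, mem_filter, mem_univ, true_and, mem_powersetCard, not_disjoint_iff,
      subset_iff] at h ⊢
    exact ⟨(kDescentSet_headTailPerm_eq_empty_iff _ _ _ hK hn).2 ⟨h.1, h.2.2⟩,
      (headRunBelow_headTailPerm_iff _ _ _ hK).2 h.2.1.1⟩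
  · rintro ⟨t, S⟩ _ ⟨t', S'⟩ _ h
    obtain ⟨rfl, rfl⟩ := headTailPerm_inj h
    rfl
  · intro v hv
    simp only [mem_filter, mem_univ, true_and] at hv
    obtain ⟨S, hS, t, rfl⟩ := exists_headTailPerm_eq hv.2.2
    obtain ⟨ht, hSt⟩ := (kDescentSet_headTailPerm_eq_empty_iff S hS t hK hn).1 hv.1
    refine ⟨⟨t, S⟩, ?_, rfl⟩
    simp only [mem_sigma, mem_filter, mem_univ, true_and, mem_powersetCard, not_disjoint_iff,
      subset_iff]
    exact ⟨ht, ⟨(headRunBelow_headTailPerm_iff S hS t hK).1 hv.2, hS⟩, hSt⟩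

theorem card_powersetCard_filter_val_lt_not_disjoint {N a u : ℕ} (ha : a ≤ N) (K : ℕ) :
    #{S ∈ ({x | (x : ℕ) < a} : Finset (Fin N)).powersetCard K |
        ¬ Disjoint S ({x | (x : ℕ) < u} : Finset (Fin N))} = a.choose K - (a - u).choose K := by
  have hinter : ({x | (x : ℕ) < u} : Finset (Fin N)) ∩ ({x | (x : ℕ) < a} : Finset (Fin N)) =
      ({x | (x : ℕ) < min u a} : Finset (Fin N)) := by
    ext
    simp
  rw [card_filter_not_disjoint_powersetCard, card_sdiff, hinter, Fin.card_filter_val_lt,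
    Fin.card_filter_val_lt, min_eq_right ha]
  congr 2
  omega

theorem card_avoiding_headRunBelow {n K m : ℕ} (hK : 0 < K) (hn : 0 < n) (hm : m ≤ n + K + 1) :
    #{v : Perm (Fin (n + K)) | kDescentSet (K + 1) (n + K) v = ∅ ∧ HeadRunBelow K m v} =
      ∑ u ∈ Icc 1 n, fKm (K + 1) u n * ((m - 1).choose K - (m - 1 - u).choose K) := by
  have hmaps : ∀ t ∈ ({t : Perm (Fin n) | kDescentSet (K + 1) n t = ∅} : Finset _),
      permVal n t 1 ∈ Icc 1 n := fun t _ => by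
    rw [permVal_succ t hn, mem_Icc]
    omega
  rw [card_avoiding_headRunBelow_eq_sum hK hn,
    sum_congr rfl fun t _ => card_powersetCard_filter_val_lt_not_disjoint (by omega) K,
    ← sum_fiberwise_of_maps_to hmaps]
  refine sum_congr rfl fun u _ => ?_
  rw [sum_congr rfl fun t ht => by rw [(mem_filter.1 ht).2], sum_const, smul_eq_mul, filter_filter]
  rfl

/-- Proposition: recurrence for `f_k(m, n+k)`.
For `k ≥ 2`, `n ≥ 1` and `1 ≤ m ≤ n + k`,
`f_k(m, n+k) = f_k(n+k-1) - ( Σ_{u=1}^{n} f_k(u,n)·C(m-1,k-1)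
  - Σ_{u=1}^{min(m-1,n)} f_k(u,n)·C(m-1-u,k-1) )`. -/
theorem fKm_recurrence (k n m : ℕ) (hk : 2 ≤ k) (hn : 1 ≤ n)
    (hm : 1 ≤ m) (hmn : m ≤ n + k) :
    (fKm k m (n + k) : ℤ) =
      (fK k (n + k - 1) : ℤ) -
        ((∑ u ∈ Finset.Icc 1 n,
            (fKm k u n : ℤ) * (Nat.choose (m - 1) (k - 1) : ℤ)) -
         (∑ u ∈ Finset.Icc 1 (min (m - 1) n),
            (fKm k u n : ℤ) * (Nat.choose (m - 1 - u) (k - 1) : ℤ))) := by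
  obtain ⟨K, rfl⟩ : ∃ K, k = K + 1 := ⟨k - 1, by omega⟩
  have hinsert := fKm_add_card_headRunBelow (K := K) (N := n + K) (by omega) (by omega)
    ⟨m - 1, by omega⟩
  rw [Fin.val_mk, Nat.sub_add_cancel hm, card_avoiding_headRunBelow (by omega) hn hmn] at hinsert
  have hcast : ((∑ u ∈ Icc 1 n,
      fKm (K + 1) u n * ((m - 1).choose K - (m - 1 - u).choose K) : ℕ) : ℤ) =
        ∑ u ∈ Icc 1 n, (fKm (K + 1) u n : ℤ) * ((m - 1).choose K : ℤ) -
          ∑ u ∈ Icc 1 n, (fKm (K + 1) u n : ℤ) * ((m - 1 - u).choose K : ℤ) := by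
    rw [Nat.cast_sum, ← sum_sub_distrib]
    refine sum_congr rfl fun u _ => ?_
    rw [Nat.cast_mul, Nat.cast_sub (Nat.choose_le_choose K (Nat.sub_le _ _)), mul_sub]
  have hsum :
      ∑ u ∈ Icc 1 (min (m - 1) n), (fKm (K + 1) u n : ℤ) * ((m - 1 - u).choose K : ℤ) =
        ∑ u ∈ Icc 1 n, (fKm (K + 1) u n : ℤ) * ((m - 1 - u).choose K : ℤ) := by
    refine sum_subset (Icc_subset_Icc le_rfl (min_le_right _ _)) fun u hu hu' => ?_
    simp only [mem_Icc] at hu hu'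
    rw [show m - 1 - u = 0 by omega, Nat.choose_eq_zero_of_lt (by omega)]
    simp
  rw [Nat.add_sub_cancel, ← Nat.add_assoc, Nat.add_sub_cancel, hsum, ← hcast, ← hinsert]
  push_cast
  ring
end

section
/- For all integers k ≥ 2, n ≥ 1 and m with 1 ≤ m ≤ n, the k-th finite difference of the sequence (f_k(1,n+k), f_k(2,n+k), ..., f_k(n+k,n+k)) equals the sequence (f_k(1,n), ..., f_k(n,n)); explicitly, Σ_{i=0}^{k} (-1)^{k-i}·C(k,i)·f_k(m+i, n+k) = f_k(m, n). -/
/-! For fixed `m`, deleting the first letter `w(1) = m` of `w ∈ S_{N+1}` and standardizing the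
rest to `v ∈ S_N` is a bijection onto `S_N`, under which `w` avoids `k`-descents iff `v` does and
`v` does not begin with a decreasing run of length `k - 1` whose first value is `< m`. Split the
avoiders according to the exact length `r < k` of their initial decreasing run, giving counts
`g_r(m, N)`. An initial run of `w` of length `r + 1 ≥ 2` is an initial run of `v` of length `r`
starting below `m`, so the forward differences in `m` are
  `Δ f(·, N+1) = -g_{k-1}(·, N)`,  `Δ g_{r+1}(·, N+1) = g_r(·, N)`,  `Δ g_1(·, N+1) = -f(·, N)`.
Each difference lowers `r` by one, and after `k` of them one is back at `f(·, N)`. -/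

open Finset Equiv

lemma Equiv.optionCongr_removeNone {α β : Type*} {e : Option α ≃ Option β} (he : e none = none) :
    optionCongr (removeNone e) = e := by
  ext1 x
  cases x with
  | none => exact he.symm
  | some x =>
    obtain ⟨y, hy⟩ := Option.ne_none_iff_exists'.1 fun h =>
      Option.some_ne_none x (e.injective (h.trans he.symm))
    rw [optionCongr_apply, Option.map_some, removeNone_some e ⟨y, hy⟩]

lemma card_filter_and_not_add_card_filter_and {α : Type*} [Fintype α] (Q R : α → Prop)
    [DecidablePred Q] [DecidablePred R] :
    #{a | Q a ∧ ¬R a} + #{a | Q a ∧ R a} = #{a | Q a} := by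
  rw [add_comm, ← card_filter_add_card_filter_not (s := {a | Q a}) R, filter_filter, filter_filter]

lemma card_filter_lt_add_one {α : Type*} [Fintype α] [DecidableEq α] (Q : α → Prop)
    [DecidablePred Q] (f : α → ℕ) (m : ℕ) :
    #{a | Q a ∧ f a < m + 1} = #{a | Q a ∧ f a < m} + #{a | Q a ∧ f a = m} := by
  rw [← card_union_of_disjoint (disjoint_filter.2 fun a _ h1 h2 => by omega)]
  congr 1
  ext a
  simp only [mem_filter, mem_univ, true_and, mem_union, Nat.lt_succ_iff_lt_or_eq, and_or_left]

section ConsPerm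

variable {M : ℕ} (p : Fin (M + 1))

/-- The permutation `w` with `w(1) = p + 1` whose remaining values standardize to `v`. -/
def consPerm (v : Perm (Fin M)) : Perm (Fin (M + 1)) :=
  (finSuccEquiv M).trans (v.optionCongr.trans (finSuccEquiv' p).symm)

def tailPerm (w : Perm (Fin (M + 1))) : Perm (Fin M) :=
  removeNone (((finSuccEquiv M).symm.trans w).trans (finSuccEquiv' p))

@[simp] lemma consPerm_zero (v : Perm (Fin M)) : consPerm p v 0 = p := by
  simp [consPerm]

@[simp] lemma consPerm_succ (v : Perm (Fin M)) (i : Fin M) :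
    consPerm p v i.succ = p.succAbove (v i) := by
  simp [consPerm]

lemma tailPerm_consPerm (v : Perm (Fin M)) : tailPerm p (consPerm p v) = v := by
  have : ((finSuccEquiv M).symm.trans (consPerm p v)).trans (finSuccEquiv' p) = v.optionCongr := by
    ext1 x
    simp [consPerm]
  rw [tailPerm, this, removeNone_optionCongr]

lemma consPerm_tailPerm {w : Perm (Fin (M + 1))} (hw : w 0 = p) :
    consPerm p (tailPerm p w) = w := by
  rw [consPerm, tailPerm, optionCongr_removeNone (by simp [hw])]
  ext1 x
  simp

lemma card_filter_apply_zero_eq (P : Perm (Fin (M + 1)) → Prop) [DecidablePred P] :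
    #{w | w 0 = p ∧ P w} = #{v | P (consPerm p v)} :=
  card_nbij' (tailPerm p) (consPerm p)
    (fun w hw => by simp_all [consPerm_tailPerm])
    (fun v hv => by simp_all)
    (fun w hw => by simp_all [consPerm_tailPerm])
    (fun v _ => tailPerm_consPerm p v)

end ConsPerm

lemma permVal_of_pos_of_le {N : ℕ} (w : Perm (Fin N)) {i : ℕ} (hi : 1 ≤ i) (hiN : i ≤ N) :
    permVal N w i = w ⟨i - 1, by omega⟩ + 1 :=
  dif_pos (by omega)

lemma card_filter_permVal_one_eq {M m : ℕ} (hm : 1 ≤ m) (hmM : m ≤ M + 1)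
    (P : Perm (Fin (M + 1)) → Prop) [DecidablePred P] :
    #{w | P w ∧ permVal (M + 1) w 1 = m} = #{v | P (consPerm ⟨m - 1, by omega⟩ v)} := by
  rw [← card_filter_apply_zero_eq]
  congr 1
  ext w
  simp only [mem_filter, mem_univ, true_and, permVal_of_pos_of_le w le_rfl (by omega : 1 ≤ M + 1),
    Fin.ext_iff]
  change _ ∧ (w 0 : ℕ) + 1 = m ↔ (w 0 : ℕ) = m - 1 ∧ _
  rw [and_comm, show (w 0 : ℕ) + 1 = m ↔ (w 0 : ℕ) = m - 1 by omega]

section ConsPermVal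

variable {M : ℕ} (p : Fin (M + 1)) (v : Perm (Fin M))

lemma permVal_consPerm_one : permVal (M + 1) (consPerm p v) 1 = p + 1 := by
  rw [permVal_of_pos_of_le _ le_rfl (by omega)]
  exact congrArg (· + 1) (congrArg Fin.val (consPerm_zero p v))

lemma permVal_consPerm_succ {i : ℕ} (hi : 1 ≤ i) (hiM : i ≤ M) :
    permVal (M + 1) (consPerm p v) (i + 1) = p.succAbove (v ⟨i - 1, by omega⟩) + 1 := by
  rw [permVal_of_pos_of_le _ (by omega) (by omega), ← consPerm_succ]
  congr 3
  ext
  simp only [Fin.val_succ]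
  omega

lemma permVal_consPerm_succ_lt_succ_iff {i i' : ℕ} (hi : 1 ≤ i) (hiM : i ≤ M) (hi' : 1 ≤ i')
    (hi'M : i' ≤ M) :
    permVal (M + 1) (consPerm p v) (i + 1) < permVal (M + 1) (consPerm p v) (i' + 1) ↔
      permVal M v i < permVal M v i' := by
  rw [permVal_consPerm_succ p v hi hiM, permVal_consPerm_succ p v hi' hi'M,
    permVal_of_pos_of_le v hi hiM, permVal_of_pos_of_le v hi' hi'M, add_lt_add_iff_right,
    add_lt_add_iff_right, Fin.val_fin_lt, Fin.succAbove_lt_succAbove_iff, Fin.val_fin_lt]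

lemma permVal_consPerm_two_lt_one_iff (hM : 1 ≤ M) :
    permVal (M + 1) (consPerm p v) 2 < permVal (M + 1) (consPerm p v) 1 ↔
      permVal M v 1 ≤ p := by
  rw [permVal_consPerm_succ p v le_rfl hM, permVal_consPerm_one, permVal_of_pos_of_le v le_rfl hM,
    add_lt_add_iff_right, Fin.val_fin_lt, Fin.succAbove_lt_iff_castSucc_lt, Fin.lt_def,
    Fin.val_castSucc]
  omega

end ConsPermVal

/-- `w(i) > w(i+1) > ⋯ > w(i+r-1)`, as in the filter of `kDescentSet`. -/
def DecreasingRun (N : ℕ) (w : Perm (Fin N)) (i r : ℕ) : Prop :=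
  ∀ j < r - 1, permVal N w (i + j + 1) < permVal N w (i + j)

def DecreasingPrefix (N r : ℕ) (w : Perm (Fin N)) : Prop :=
  r ≤ N ∧ DecreasingRun N w 1 r

instance (N r : ℕ) : DecidablePred (DecreasingPrefix N r) :=
  fun _ => inferInstanceAs (Decidable (r ≤ N ∧ ∀ j < r - 1, _))

section Runs

variable {N : ℕ} {w : Perm (Fin N)}

lemma mem_kDescentSet {k i : ℕ} :
    i ∈ kDescentSet k N w ↔ 1 ≤ i ∧ i + k ≤ N + 1 ∧ DecreasingRun N w i k := by
  rw [kDescentSet, mem_filter, mem_Icc, DecreasingRun]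
  exact ⟨fun ⟨⟨hi, hik⟩, h⟩ => ⟨hi, by omega, h⟩, fun ⟨hi, hik, h⟩ => ⟨⟨hi, by omega⟩, h⟩⟩

lemma kDescentSet_eq_empty_iff_s1 {k : ℕ} :
    kDescentSet k N w = ∅ ↔ ∀ i, 1 ≤ i → i + k ≤ N + 1 → ¬DecreasingRun N w i k := by
  simp only [eq_empty_iff_forall_notMem, mem_kDescentSet, not_and]

lemma not_decreasingPrefix_of_kDescentSet_eq_empty {k : ℕ} (hw : kDescentSet k N w = ∅) :
    ¬DecreasingPrefix N k w :=
  fun h => kDescentSet_eq_empty_iff_s1.1 hw 1 le_rfl (by have := h.1; omega) h.2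

lemma decreasingPrefix_one (hN : 1 ≤ N) : DecreasingPrefix N 1 w :=
  ⟨hN, fun _ hj => absurd hj (Nat.not_lt_zero _)⟩

lemma DecreasingPrefix.mono {r r' : ℕ} (h : DecreasingPrefix N r w) (hr : r' ≤ r) :
    DecreasingPrefix N r' w :=
  ⟨hr.trans h.1, fun j hj => h.2 j (by omega)⟩

lemma decreasingRun_add_two {i r : ℕ} :
    DecreasingRun N w i (r + 2) ↔
      permVal N w (i + 1) < permVal N w i ∧ DecreasingRun N w (i + 1) (r + 1) := by
  rw [DecreasingRun, DecreasingRun, show r + 2 - 1 = r + 1 by omega, Nat.add_sub_cancel,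
    Nat.forall_lt_succ_left]
  simp only [add_zero, ← add_assoc, Nat.add_right_comm i 1]

end Runs

section ConsPermRuns

variable {M : ℕ} (p : Fin (M + 1)) (v : Perm (Fin M))

lemma decreasingRun_consPerm_succ {i r : ℕ} (hi : 1 ≤ i) (hir : i + r ≤ M + 1) :
    DecreasingRun (M + 1) (consPerm p v) (i + 1) r ↔ DecreasingRun M v i r := by
  refine forall₂_congr fun j hj => ?_
  rw [show i + 1 + j + 1 = i + j + 1 + 1 by omega, show i + 1 + j = i + j + 1 by omega,
    permVal_consPerm_succ_lt_succ_iff p v (by omega) (by omega) (by omega) (by omega)]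

lemma decreasingPrefix_consPerm_succ {r : ℕ} (hr : 1 ≤ r) :
    DecreasingPrefix (M + 1) (r + 1) (consPerm p v) ↔
      permVal M v 1 ≤ p ∧ DecreasingPrefix M r v := by
  obtain ⟨r, rfl⟩ : ∃ r', r = r' + 1 := ⟨r - 1, by omega⟩
  by_cases hrM : r + 1 ≤ M
  · rw [DecreasingPrefix, DecreasingPrefix, decreasingRun_add_two,
      permVal_consPerm_two_lt_one_iff p v (by omega), decreasingRun_consPerm_succ p v le_rfl (by omega),
      Nat.add_le_add_iff_right]
    tauto
  · exact iff_of_false (fun h => hrM (by have := h.1; omega)) (fun h => hrM h.2.1)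

lemma kDescentSet_consPerm_eq_empty_iff {k : ℕ} :
    kDescentSet k (M + 1) (consPerm p v) = ∅ ↔
      kDescentSet k M v = ∅ ∧ ¬DecreasingPrefix (M + 1) k (consPerm p v) := by
  refine ⟨fun h => ⟨?_, not_decreasingPrefix_of_kDescentSet_eq_empty h⟩, fun ⟨hv, hpre⟩ => ?_⟩
  · rw [kDescentSet_eq_empty_iff_s1] at h ⊢
    intro i hi hik hrun
    exact h (i + 1) (by omega) (by omega)
      ((decreasingRun_consPerm_succ p v hi (by omega)).2 hrun)
  · rw [kDescentSet_eq_empty_iff_s1] at hv ⊢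
    rintro (_ | _ | i) hi hik hrun
    · omega
    · exact hpre ⟨by omega, hrun⟩
    · exact hv (i + 1) (by omega) (by omega)
        ((decreasingRun_consPerm_succ p v (by omega) (by omega)).1 hrun)

lemma kDescentSet_consPerm_eq_empty_iff_of_two_le {k : ℕ} (hk : 2 ≤ k) :
    kDescentSet k (M + 1) (consPerm p v) = ∅ ↔
      kDescentSet k M v = ∅ ∧ ¬(permVal M v 1 ≤ p ∧ DecreasingPrefix M (k - 1) v) := by
  obtain ⟨k, rfl⟩ : ∃ k', k = k' + 1 := ⟨k - 1, by omega⟩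
  rw [kDescentSet_consPerm_eq_empty_iff, decreasingPrefix_consPerm_succ p v (by omega),
    Nat.add_sub_cancel]

end ConsPermRuns

/-- The count `g_r(m, N)`: the part of `f_k(m, N)` whose initial decreasing run has length
exactly `r`. -/
def fKmRun (k r m N : ℕ) : ℕ :=
  #{w : Perm (Fin N) | (kDescentSet k N w = ∅ ∧ DecreasingPrefix N r w ∧
    ¬DecreasingPrefix N (r + 1) w) ∧ permVal N w 1 = m}

section FirstValue

variable {k M m : ℕ}

lemma fKm_succ_add_card (hk : 2 ≤ k) (hm : 1 ≤ m) (hmM : m ≤ M + 1) :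
    fKm k m (M + 1) + #{v : Perm (Fin M) | (kDescentSet k M v = ∅ ∧
      DecreasingPrefix M (k - 1) v) ∧ permVal M v 1 < m} = #{v | kDescentSet k M v = ∅} := by
  rw [fKm, dIm, card_filter_permVal_one_eq hm hmM, ← card_filter_and_not_add_card_filter_and
    (fun v => kDescentSet k M v = ∅) (fun v => DecreasingPrefix M (k - 1) v ∧ permVal M v 1 < m)]
  congr 2 <;> ext v
  · simp only [mem_filter, mem_univ, true_and,
      kDescentSet_consPerm_eq_empty_iff_of_two_le _ _ hk]
    rw [Nat.le_sub_one_iff_lt hm, and_comm (a := _ < m)]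
  · simp only [mem_filter, mem_univ, true_and, and_assoc]

lemma fKmRun_one_succ_add_card (hk : 2 ≤ k) (hM : 1 ≤ M) (hm : 1 ≤ m) (hmM : m ≤ M + 1) :
    fKmRun k 1 m (M + 1) + #{v : Perm (Fin M) | kDescentSet k M v = ∅ ∧ permVal M v 1 < m} =
      #{v | kDescentSet k M v = ∅} := by
  rw [fKmRun, card_filter_permVal_one_eq hm hmM, ← card_filter_and_not_add_card_filter_and
    (fun v => kDescentSet k M v = ∅) (fun v => permVal M v 1 < m)]
  congr 2
  ext v
  simp only [mem_filter, mem_univ, true_and, kDescentSet_consPerm_eq_empty_iff_of_two_le _ _ hk,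
    decreasingPrefix_consPerm_succ _ v le_rfl, decreasingPrefix_one hM,
    decreasingPrefix_one (Nat.le_add_left 1 M), Nat.le_sub_one_iff_lt hm]
  tauto

lemma fKmRun_succ_succ {r : ℕ} (hm : 1 ≤ m) (hmM : m ≤ M + 1) (hr : 1 ≤ r)
    (hrk : r + 2 ≤ k) :
    fKmRun k (r + 1) m (M + 1) = #{v : Perm (Fin M) | (kDescentSet k M v = ∅ ∧
      DecreasingPrefix M r v ∧ ¬DecreasingPrefix M (r + 1) v) ∧ permVal M v 1 < m} := by
  rw [fKmRun, card_filter_permVal_one_eq hm hmM]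
  congr 1
  ext v
  have hmono : DecreasingPrefix M (k - 1) v → DecreasingPrefix M (r + 1) v :=
    fun h => h.mono (by omega)
  simp only [mem_filter, mem_univ, true_and,
    kDescentSet_consPerm_eq_empty_iff_of_two_le _ _ (by omega : 2 ≤ k),
    decreasingPrefix_consPerm_succ _ v hr, decreasingPrefix_consPerm_succ _ v (r := r + 1)
    (by omega), Nat.le_sub_one_iff_lt hm]
  tauto

lemma fwdDiff_fKm_succ (hk : 2 ≤ k) (hm : 1 ≤ m) (hmM : m ≤ M) :
    fwdDiff 1 (fun t => (fKm k t (M + 1) : ℤ)) m = -fKmRun k (k - 1) m M := by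
  have hrun : fKmRun k (k - 1) m M = #{v : Perm (Fin M) | (kDescentSet k M v = ∅ ∧
      DecreasingPrefix M (k - 1) v) ∧ permVal M v 1 = m} := by
    rw [fKmRun, Nat.sub_add_cancel (by omega : 1 ≤ k)]
    congr 1
    ext v
    simp only [mem_filter, mem_univ, true_and]
    have := @not_decreasingPrefix_of_kDescentSet_eq_empty _ v k
    tauto
  have hm₀ := fKm_succ_add_card (M := M) hk hm (by omega)
  have hm₁ := fKm_succ_add_card (M := M) hk (m := m + 1) (by omega) (by omega)
  have hstep := card_filter_lt_add_one
    (fun v : Perm (Fin M) => kDescentSet k M v = ∅ ∧ DecreasingPrefix M (k - 1) v)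
    (permVal M · 1) m
  simp only [fwdDiff]
  omega

lemma fwdDiff_fKmRun_one_succ (hk : 2 ≤ k) (hm : 1 ≤ m) (hmM : m ≤ M) :
    fwdDiff 1 (fun t => (fKmRun k 1 t (M + 1) : ℤ)) m = -fKm k m M := by
  have hm₀ := fKmRun_one_succ_add_card (M := M) hk (by omega) hm (by omega)
  have hm₁ := fKmRun_one_succ_add_card (M := M) hk (by omega) (m := m + 1) (by omega) (by omega)
  have hstep := card_filter_lt_add_one (kDescentSet k M · = ∅) (permVal M · 1) m
  have hf : fKm k m M = #{v : Perm (Fin M) | kDescentSet k M v = ∅ ∧ permVal M v 1 = m} := rfl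
  simp only [fwdDiff]
  omega

lemma fwdDiff_fKmRun_succ_succ {r : ℕ} (hm : 1 ≤ m) (hmM : m ≤ M) (hr : 1 ≤ r)
    (hrk : r + 2 ≤ k) :
    fwdDiff 1 (fun t => (fKmRun k (r + 1) t (M + 1) : ℤ)) m = fKmRun k r m M := by
  have hstep := card_filter_lt_add_one (fun v : Perm (Fin M) =>
    kDescentSet k M v = ∅ ∧ DecreasingPrefix M r v ∧ ¬DecreasingPrefix M (r + 1) v)
    (permVal M · 1) m
  simp only [fwdDiff, fKmRun_succ_succ (M := M) hm (by omega) hr hrk,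
    fKmRun_succ_succ (M := M) (m := m + 1) (by omega) (by omega) hr hrk]
  rw [hstep, fKmRun]
  push_cast
  ring

end FirstValue

lemma fwdDiff_iter_fKm {k : ℕ} (j : ℕ) (hjk : j + 2 ≤ k) {N m : ℕ} (hm : 1 ≤ m) (hmN : m ≤ N) :
    (fwdDiff 1)^[j + 1] (fun t => (fKm k t (N + (j + 1)) : ℤ)) m = -fKmRun k (k - 1 - j) m N := by
  induction j generalizing N m with
  | zero => simpa using fwdDiff_fKm_succ (by omega) hm hmN
  | succ j ih =>
    have hrun := fwdDiff_fKmRun_succ_succ (k := k) (r := k - 1 - (j + 1)) hm hmN (by omega)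
      (by omega)
    rw [show k - 1 - (j + 1) + 1 = k - 1 - j by omega, fwdDiff] at hrun
    rw [Function.iterate_succ_apply', show N + (j + 1 + 1) = N + 1 + (j + 1) by omega, fwdDiff,
      ih (by omega) (by omega) (by omega), ih (by omega) hm (by omega)]
    linarith

lemma fwdDiff_iter_fKm_self {k n m : ℕ} (hk : 2 ≤ k) (hm : 1 ≤ m) (hmn : m ≤ n) :
    (fwdDiff 1)^[k] (fun t => (fKm k t (n + k) : ℤ)) m = fKm k m n := by
  obtain ⟨j, rfl⟩ : ∃ j, k = j + 2 := ⟨k - 2, by omega⟩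
  have hrun := fwdDiff_fKmRun_one_succ hk hm hmn
  rw [fwdDiff] at hrun
  rw [Function.iterate_succ_apply', show n + (j + 2) = n + 1 + (j + 1) by omega, fwdDiff,
    fwdDiff_iter_fKm j le_rfl (by omega) (by omega), fwdDiff_iter_fKm j le_rfl hm (by omega),
    show j + 2 - 1 - j = 1 by omega]
  linarith

theorem fKm_kth_difference_general (k n m : ℕ) (hk : 2 ≤ k)
    (hm : 1 ≤ m) (hmn : m ≤ n) :
    (∑ i ∈ Finset.range (k + 1),
        (-1 : ℤ) ^ (k - i) * (Nat.choose k i : ℤ) * (fKm k (m + i) (n + k) : ℤ))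
      = (fKm k m n : ℤ) := by
  rw [← fwdDiff_iter_fKm_self hk hm hmn, fwdDiff_iter_eq_sum_shift]
  simp only [smul_eq_mul, mul_one]

/-- Theorem: `k`-th difference recurrence.
For `k ≥ 2`, `n ≥ 1`, `1 ≤ m ≤ n`, the `k`-th finite difference of the sequence
`(f_k(1,n+k), …, f_k(n+k,n+k))` equals `(f_k(1,n), …, f_k(n,n))`; explicitly,
`Σ_{i=0}^{k} (-1)^{k-i}·C(k,i)·f_k(m+i, n+k) = f_k(m, n)`. -/
theorem fKm_kth_difference (k n m : ℕ) (hk : 2 ≤ k) (hn : 1 ≤ n)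
    (hm : 1 ≤ m) (hmn : m ≤ n) :
    (∑ i ∈ Finset.range (k + 1),
        (-1 : ℤ) ^ (k - i) * (Nat.choose k i : ℤ) * (fKm k (m + i) (n + k) : ℤ))
      = (fKm k m n : ℤ) :=
  fKm_kth_difference_general k n m hk hm hmn
end

section
/- For all integers k ≥ 2, every finite set I of positive integers, and every integer n ≥ max(I ∪ {0}) + k − 1, the k-th finite difference of the sequence (d_k(r_{n+k}(I), 1, n+k), d_k(r_{n+k}(I), 2, n+k), ..., d_k(r_{n+k}(I), n+k, n+k)) equals the sequence (d_k(r_n(I), 1, n), ..., d_k(r_n(I), n, n)); explicitly, for 1 ≤ m ≤ n, Σ_{i=0}^{k} (-1)^{k-i}·C(k,i)·d_k(r_{n+k}(I), m+i, n+k) = d_k(r_n(I), m, n). -/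
/-- The `n`-reverse of a set `I`: `r_n(I) = { n + 2 - k - i : i ∈ I }` (with `r_n(∅) = ∅`). -/
def nReverse (k n : ℕ) (I : Finset ℕ) : Finset ℕ :=
  I.image (fun i => n + 2 - k - i)

/-!
Refine `d_k(K, m, N)` by the length of the initial decreasing run: `countDec k N K j m` counts the
`w ∈ S_N` with `D_k(w) = K`, `w(1) = m` and `w(1) > ⋯ > w(j)`, and `countDecTail` imposes only
`D_k(w) \ {1} = K`. Deleting the first letter of `w` and standardising is a bijection onto
`S_{N-1}` which shifts `D_k(w) \ {1}` down by one and the run length down by one, and the only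
condition left depending on `m` is `w(2) < m`. Hence a forward difference in `m` of `countDecTail`
at level `N + 1` is a `countDec` at level `N`. If `1 ∉ K`, then `countDec` is a difference of two
`countDecTail`s, because `1 ∈ D_k(w)` says exactly that the initial run has length at least `k`.
Since `r_{N+1}(I) = r_N(I) + 1`, each difference thus lowers `N` and the run length by one:
`Δ^s d_k(r_{n+k}(I), ·, n+k)` is a difference of two `countDecTail`s at level `n + k - s`, and
the `k`-th difference is `d_k(r_n(I), ·, n)`.
-/

open Finset fwdDiff

lemma fwdDiff_sub {M G : Type*} [AddCommMonoid M] [AddCommGroup G] (h : M) (f g : M → G) :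
    Δ_[h] (f - g) = Δ_[h] f - Δ_[h] g :=
  funext fun _ => sub_sub_sub_comm ..

lemma card_filter_or_of_disjoint {α : Type*} [Fintype α] {p q : α → Prop} [DecidablePred p]
    [DecidablePred q] (h : ∀ x, p x → ¬q x) :
    #{x | p x ∨ q x} = #{x | p x} + #{x | q x} := by
  classical
  rw [filter_or, card_union_of_disjoint (disjoint_filter.2 fun x _ => h x)]

namespace KDescent

def HasDecreasingPrefix (N : ℕ) (w : Equiv.Perm (Fin N)) (j : ℕ) : Prop :=
  ∀ b < j - 1, permVal N w (b + 2) < permVal N w (b + 1)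

instance (N : ℕ) (w : Equiv.Perm (Fin N)) : DecidablePred (HasDecreasingPrefix N w) :=
  fun _ => inferInstanceAs (Decidable (∀ _ < _, _))

def countDec (k N : ℕ) (K : Finset ℕ) (j m : ℕ) : ℤ :=
  #{w : Equiv.Perm (Fin N) |
    kDescentSet k N w = K ∧ permVal N w 1 = m ∧ HasDecreasingPrefix N w j}

def countDecTail (k N : ℕ) (K : Finset ℕ) (j m : ℕ) : ℤ :=
  #{w : Equiv.Perm (Fin N) |
    (kDescentSet k N w).erase 1 = K ∧ permVal N w 1 = m ∧ HasDecreasingPrefix N w j}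

variable {k N : ℕ}

lemma HasDecreasingPrefix.mono {w : Equiv.Perm (Fin N)} {i j : ℕ} (hij : i ≤ j)
    (h : HasDecreasingPrefix N w j) : HasDecreasingPrefix N w i :=
  fun b hb => h b (by omega)

lemma one_le_of_mem_kDescentSet {w : Equiv.Perm (Fin N)} {i : ℕ}
    (h : i ∈ kDescentSet k N w) : 1 ≤ i :=
  (mem_Icc.1 (mem_filter.1 h).1).1

lemma one_mem_kDescentSet_iff {w : Equiv.Perm (Fin N)} (hkN : k ≤ N) :
    1 ∈ kDescentSet k N w ↔ HasDecreasingPrefix N w k := by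
  simp only [kDescentSet, mem_filter, mem_Icc, HasDecreasingPrefix]
  refine (and_iff_right (by omega)).trans (forall₂_congr fun b _ => ?_)
  rw [show 1 + b + 1 = b + 2 by omega, add_comm 1 b]

lemma countDec_eq_countDecTail_sub {K : Finset ℕ} (hK : 1 ∉ K) {j : ℕ} (hjk : j ≤ k)
    (hkN : k ≤ N) (m : ℕ) :
    countDec k N K j m = countDecTail k N K j m - countDecTail k N K k m := by
  rw [countDec, countDecTail, countDecTail, eq_sub_iff_add_eq, ← Nat.cast_add,
    ← card_filter_or_of_disjoint]
  · congr 2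
    ext w
    simp only [mem_filter, mem_univ, true_and, ← one_mem_kDescentSet_iff hkN]
    constructor
    · rintro (⟨hD, hwm, hj⟩ | ⟨hD, hwm, h1⟩)
      · exact ⟨by rw [hD, erase_eq_of_notMem hK], hwm, hj⟩
      · exact ⟨hD, hwm, ((one_mem_kDescentSet_iff hkN).1 h1).mono hjk⟩
    · rintro ⟨hD, hwm, hj⟩
      by_cases h1 : 1 ∈ kDescentSet k N w
      · exact Or.inr ⟨hD, hwm, h1⟩
      · exact Or.inl ⟨by rwa [erase_eq_of_notMem h1] at hD, hwm, hj⟩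
  · rintro w ⟨hD, -, -⟩ ⟨-, -, hk⟩
    exact hK (hD ▸ (one_mem_kDescentSet_iff hkN).2 hk)

lemma dIm_eq_countDec (K : Finset ℕ) (m : ℕ) :
    (dIm k K m N : ℤ) = countDec k N K 1 m := by
  have htriv (w : Equiv.Perm (Fin N)) : HasDecreasingPrefix N w 1 := fun b hb => by omega
  simp [dIm, countDec, htriv]

section consPerm

-- In one-line notation: `a` followed by `e`, with every value `≥ a` raised by one.
def consPerm (a : Fin (N + 1)) (e : Equiv.Perm (Fin N)) : Equiv.Perm (Fin (N + 1)) :=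
  (finSuccEquiv' 0).trans (e.optionCongr.trans (finSuccEquiv' a).symm)

variable (a : Fin (N + 1)) (e : Equiv.Perm (Fin N))

@[simp] lemma consPerm_zero : consPerm a e 0 = a := by
  simp [consPerm, finSuccEquiv'_at, finSuccEquiv'_symm_none]

@[simp] lemma consPerm_succ (i : Fin N) : consPerm a e i.succ = a.succAbove (e i) := by
  simp [consPerm, finSuccEquiv'_zero, finSuccEquiv'_symm_some]

lemma consPerm_injective : Function.Injective (consPerm (N := N) a) := by
  intro e₁ e₂ h
  exact Equiv.ext fun i => by simpa using congr($h i.succ)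

lemma exists_consPerm_eq (w : Equiv.Perm (Fin (N + 1))) : ∃ e, consPerm (w 0) e = w := by
  have hne (i : Fin N) : w i.succ ≠ w 0 := w.injective.ne (Fin.succ_ne_zero i)
  choose f hf using fun i => Fin.exists_succAbove_eq (hne i)
  have hf_inj : Function.Injective f := fun i i' h =>
    Fin.succ_injective _ (w.injective (by rw [← hf, ← hf, h]))
  refine ⟨Equiv.ofBijective f (Finite.injective_iff_bijective.1 hf_inj), ?_⟩
  ext i
  refine Fin.cases ?_ (fun i => ?_) i <;> simp [hf]

lemma card_filter_consPerm (P : Equiv.Perm (Fin (N + 1)) → Prop) [DecidablePred P] :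
    #{w | w 0 = a ∧ P w} = #{e | P (consPerm a e)} := by
  refine (card_nbij (consPerm a) (fun e he => ?_) (consPerm_injective a).injOn
    (fun w hw => ?_)).symm
  · simp_all
  · simp only [coe_filter, mem_univ, true_and, Set.mem_ofPred_eq] at hw
    obtain ⟨e, he⟩ := exists_consPerm_eq w
    rw [hw.1] at he
    exact ⟨e, by simp [he, hw.2], he⟩

lemma permVal_succ_one (w : Equiv.Perm (Fin (N + 1))) : permVal (N + 1) w 1 = w 0 + 1 := rfl

-- Also for `i > N`, where both sides are the out-of-range value `0`.
lemma permVal_consPerm_succ {i : ℕ} (hi : 1 ≤ i) :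
    permVal (N + 1) (consPerm a e) (i + 1) =
      if permVal N e i ≤ a then permVal N e i else permVal N e i + 1 := by
  unfold permVal
  by_cases h : i - 1 < N
  · have hidx : (⟨i + 1 - 1, by omega⟩ : Fin (N + 1)) = Fin.succ ⟨i - 1, h⟩ := by
      ext; simp; omega
    rw [dif_pos (by omega), dif_pos h, hidx, consPerm_succ, Fin.succAbove]
    split_ifs <;> simp_all [Fin.lt_def]; omega
  · rw [dif_neg (by omega), dif_neg h]
    simp

lemma permVal_consPerm_succ_lt_iff {i i' : ℕ} (hi : 1 ≤ i) (hi' : 1 ≤ i') :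
    permVal (N + 1) (consPerm a e) (i + 1) < permVal (N + 1) (consPerm a e) (i' + 1) ↔
      permVal N e i < permVal N e i' := by
  rw [permVal_consPerm_succ a e hi, permVal_consPerm_succ a e hi']
  split_ifs <;> omega

lemma succ_mem_kDescentSet_consPerm {i : ℕ} (hi : 1 ≤ i) :
    i + 1 ∈ kDescentSet k (N + 1) (consPerm a e) ↔ i ∈ kDescentSet k N e := by
  simp only [kDescentSet, mem_filter, mem_Icc]
  refine and_congr (by omega) (forall₂_congr fun b _ => ?_)
  rw [show i + 1 + b + 1 = i + b + 1 + 1 by omega, show i + 1 + b = i + b + 1 by omega]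
  exact permVal_consPerm_succ_lt_iff a e (by omega) (by omega)

lemma kDescentSet_consPerm_erase_one :
    (kDescentSet k (N + 1) (consPerm a e)).erase 1 = (kDescentSet k N e).image (· + 1) := by
  ext i
  simp only [mem_erase, mem_image]
  constructor
  · rintro ⟨hi1, hi⟩
    have := one_le_of_mem_kDescentSet hi
    refine ⟨i - 1, (succ_mem_kDescentSet_consPerm a e (by omega)).1 ?_, by omega⟩
    rwa [Nat.sub_add_cancel (by omega)]
  · rintro ⟨i, hi, rfl⟩
    have := one_le_of_mem_kDescentSet hi
    exact ⟨by omega, (succ_mem_kDescentSet_consPerm a e this).2 hi⟩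

lemma hasDecreasingPrefix_consPerm {j : ℕ} :
    HasDecreasingPrefix (N + 1) (consPerm a e) j ↔
      (2 ≤ j → permVal N e 1 ≤ a) ∧ HasDecreasingPrefix N e (j - 1) := by
  have hhead : permVal (N + 1) (consPerm a e) 2 < permVal (N + 1) (consPerm a e) 1 ↔
      permVal N e 1 ≤ a := by
    rw [permVal_consPerm_succ a e le_rfl, permVal_succ_one, consPerm_zero]
    split_ifs <;> omega
  constructor
  · intro h
    refine ⟨fun hj => hhead.1 (h 0 (by omega)), fun b hb => ?_⟩
    exact (permVal_consPerm_succ_lt_iff a e (by omega) (by omega)).1 (h (b + 1) (by omega))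
  · rintro ⟨hhd, htl⟩ (_ | b) hb
    · exact hhead.2 (hhd (by omega))
    · exact (permVal_consPerm_succ_lt_iff a e (by omega) (by omega)).2 (htl b (by omega))

end consPerm

lemma countDecTail_succ (K : Finset ℕ) (j : ℕ) {m : ℕ} (hm : 1 ≤ m) (hmN : m ≤ N + 1) :
    countDecTail k (N + 1) (K.image (· + 1)) j m =
      #{e : Equiv.Perm (Fin N) | kDescentSet k N e = K ∧ (2 ≤ j → permVal N e 1 < m) ∧
        HasDecreasingPrefix N e (j - 1)} := by
  obtain ⟨a, ha⟩ : ∃ a : Fin (N + 1), (a : ℕ) + 1 = m :=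
    ⟨⟨m - 1, by omega⟩, by simp only; omega⟩
  have hfirst (w : Equiv.Perm (Fin (N + 1))) : permVal (N + 1) w 1 = m ↔ w 0 = a := by
    rw [permVal_succ_one, Fin.ext_iff]
    omega
  calc countDecTail k (N + 1) (K.image (· + 1)) j m
      = #{w | w 0 = a ∧ ((kDescentSet k (N + 1) w).erase 1 = K.image (· + 1) ∧
          HasDecreasingPrefix (N + 1) w j)} := by
        unfold countDecTail
        simp only [hfirst]
        congr 2; ext
        simp only [mem_filter, mem_univ, true_and]
        tauto
    _ = _ := by
        rw [card_filter_consPerm]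
        congr 2; ext e
        simp only [mem_filter, mem_univ, true_and]
        rw [kDescentSet_consPerm_erase_one, (image_injective (add_left_injective 1)).eq_iff,
          hasDecreasingPrefix_consPerm, ← ha, Nat.lt_succ_iff]

lemma fwdDiff_countDecTail_one (K : Finset ℕ) {m : ℕ} (hm : 1 ≤ m) (hmN : m ≤ N) :
    Δ_[1] (countDecTail k (N + 1) (K.image (· + 1)) 1) m = 0 := by
  rw [fwdDiff, countDecTail_succ K 1 (by omega) (by omega), countDecTail_succ K 1 hm (by omega)]
  simp

lemma fwdDiff_countDecTail (K : Finset ℕ) {j m : ℕ} (hj : 2 ≤ j) (hm : 1 ≤ m)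
    (hmN : m ≤ N) :
    Δ_[1] (countDecTail k (N + 1) (K.image (· + 1)) j) m = countDec k N K (j - 1) m := by
  rw [fwdDiff, countDecTail_succ K j (by omega) (by omega), countDecTail_succ K j hm (by omega),
    countDec, sub_eq_iff_eq_add', ← Nat.cast_add, ← card_filter_or_of_disjoint (by omega)]
  congr 2
  ext e
  simp only [mem_filter, mem_univ, true_and, Nat.lt_succ_iff_lt_or_eq]
  tauto

lemma fwdDiff_countDecTail_gap {K : Finset ℕ} {j m : ℕ} (hK : 1 ∉ K) (hj : 2 ≤ j)
    (hjk : j ≤ k) (hkN : k ≤ N) (hm : 1 ≤ m) (hmN : m ≤ N) :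
    Δ_[1] (countDecTail k (N + 1) (K.image (· + 1)) (j + 1) -
        countDecTail k (N + 1) (K.image (· + 1)) j) m =
      countDecTail k N K j m - countDecTail k N K (j - 1) m := by
  rw [fwdDiff_sub, Pi.sub_apply, fwdDiff_countDecTail K (by omega) hm hmN,
    fwdDiff_countDecTail K hj hm hmN, countDec_eq_countDecTail_sub hK (by omega) hkN,
    countDec_eq_countDecTail_sub hK (by omega) hkN, Nat.add_sub_cancel]
  ring

lemma fwdDiff_countDecTail_gap_one {K : Finset ℕ} {m : ℕ} (hm : 1 ≤ m) (hmN : m ≤ N) :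
    Δ_[1] (countDecTail k (N + 1) (K.image (· + 1)) 2 -
        countDecTail k (N + 1) (K.image (· + 1)) 1) m = countDec k N K 1 m := by
  rw [fwdDiff_sub, Pi.sub_apply, fwdDiff_countDecTail K le_rfl hm hmN,
    fwdDiff_countDecTail_one K hm hmN, sub_zero]

lemma fwdDiff_countDec_one {K : Finset ℕ} {m : ℕ} (hK0 : 0 ∉ K) (hK1 : 1 ∉ K) (hk : 2 ≤ k)
    (hkN : k ≤ N) (hm : 1 ≤ m) (hmN : m ≤ N) :
    Δ_[1] (countDec k (N + 1) (K.image (· + 1)) 1) m =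
      countDecTail k N K k m - countDecTail k N K (k - 1) m := by
  have hK1' : 1 ∉ K.image (· + 1) := by simpa using hK0
  have hsplit : countDec k (N + 1) (K.image (· + 1)) 1 =
      countDecTail k (N + 1) (K.image (· + 1)) 1 - countDecTail k (N + 1) (K.image (· + 1)) k :=
    funext (countDec_eq_countDecTail_sub hK1' (by omega) (by omega))
  rw [hsplit, fwdDiff_sub, Pi.sub_apply,
    fwdDiff_countDecTail_one K hm hmN, fwdDiff_countDecTail K hk hm hmN,
    countDec_eq_countDecTail_sub hK1 (by omega) hkN]
  ring

section nReverse

variable {I : Finset ℕ}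

lemma nReverse_succ (h : I.sup id + k ≤ N + 2) :
    nReverse k (N + 1) I = (nReverse k N I).image (· + 1) := by
  rw [nReverse, nReverse, image_image]
  refine image_congr fun i hi => ?_
  have := le_sup (f := id) hi
  simp only [id, Function.comp_apply] at this ⊢
  omega

lemma notMem_nReverse {x : ℕ} (h : I.sup id + k ≤ N) (hx : x ≤ 1) : x ∉ nReverse k N I := by
  rw [nReverse, mem_image]
  rintro ⟨i, hi, rfl⟩
  have := le_sup (f := id) hi
  simp only [id] at this
  omega

lemma fwdDiff_iter_countDec (hk : 2 ≤ k) {n : ℕ} (hn : I.sup id + k - 1 ≤ n) {s t : ℕ}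
    (hs : 1 ≤ s) (ht : 1 ≤ t) (hst : s + t = k) {m : ℕ} (hm : 1 ≤ m) (hmt : m ≤ n + t) :
    (Δ_[1])^[s] (countDec k (n + k) (nReverse k (n + k) I) 1) m =
      countDecTail k (n + t) (nReverse k (n + t) I) (t + 1) m -
        countDecTail k (n + t) (nReverse k (n + t) I) t m := by
  induction s, hs using Nat.le_induction generalizing t m with
  | base =>
    obtain rfl : k = t + 1 := by omega
    rw [Function.iterate_one, ← add_assoc, nReverse_succ (by omega),
      fwdDiff_countDec_one (notMem_nReverse (by omega) (by omega))
        (notMem_nReverse (by omega) le_rfl) hk (by omega) hm hmt, Nat.add_sub_cancel]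
  | succ s hs ih =>
    rw [Function.iterate_succ_apply', fwdDiff, ih (t := t + 1) (by omega) (by omega) (by omega)
      (by omega), ih (t := t + 1) (by omega) (by omega) hm (by omega), ← add_assoc,
      nReverse_succ (by omega)]
    exact fwdDiff_countDecTail_gap (notMem_nReverse (by omega) le_rfl) (by omega) (by omega)
      (by omega) hm hmt

end nReverse

end KDescent

open KDescent

theorem dIm_kth_difference_general (k : ℕ) (hk : 2 ≤ k) (I : Finset ℕ)
    (n : ℕ) (hn : I.sup id + k - 1 ≤ n)
    (m : ℕ) (hm : 1 ≤ m) (hmn : m ≤ n) :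
    (∑ i ∈ Finset.range (k + 1),
        (-1 : ℤ) ^ (k - i) * (Nat.choose k i : ℤ) *
          (dIm k (nReverse k (n + k) I) (m + i) (n + k) : ℤ))
      = (dIm k (nReverse k n I) m n : ℤ) := by
  obtain ⟨s, rfl⟩ : ∃ s, k = s + 1 := ⟨k - 1, by omega⟩
  calc _ = (Δ_[1])^[s + 1]
          (countDec (s + 1) (n + (s + 1)) (nReverse (s + 1) (n + (s + 1)) I) 1) m := by
        simp [fwdDiff_iter_eq_sum_shift, dIm_eq_countDec]
    _ = Δ_[1] (countDecTail (s + 1) (n + 1) (nReverse (s + 1) (n + 1) I) 2 -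
          countDecTail (s + 1) (n + 1) (nReverse (s + 1) (n + 1) I) 1) m := by
        rw [Function.iterate_succ_apply', fwdDiff,
          fwdDiff_iter_countDec hk hn (by omega) le_rfl (by omega) (by omega) (by omega),
          fwdDiff_iter_countDec hk hn (by omega) le_rfl (by omega) hm (by omega)]
        rfl
    _ = _ := by
        rw [nReverse_succ (by omega), fwdDiff_countDecTail_gap_one hm hmn, dIm_eq_countDec]

/-- Theorem: `k`-th difference recurrence for general `I`.
For `k ≥ 2`, a finite set `I` of positive integers, `n ≥ max(I ∪ {0}) + k - 1`
(note `max(I ∪ {0}) = I.sup id`), and `1 ≤ m ≤ n`,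
`Σ_{i=0}^{k} (-1)^{k-i}·C(k,i)·d_k(r_{n+k}(I), m+i, n+k) = d_k(r_n(I), m, n)`. -/
theorem dIm_kth_difference (k : ℕ) (hk : 2 ≤ k) (I : Finset ℕ)
    (hpos : ∀ i ∈ I, 1 ≤ i) (n : ℕ) (hn : I.sup id + k - 1 ≤ n)
    (m : ℕ) (hm : 1 ≤ m) (hmn : m ≤ n) :
    (∑ i ∈ Finset.range (k + 1),
        (-1 : ℤ) ^ (k - i) * (Nat.choose k i : ℤ) *
          (dIm k (nReverse k (n + k) I) (m + i) (n + k) : ℤ))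
      = (dIm k (nReverse k n I) m n : ℤ) :=
  dIm_kth_difference_general k hk I n hn m hm hmn
end

section
/- For every integer k ≥ 3 and all positive integers m, n with 1 ≤ m ≤ n, f_k(m, n) = Σ_{ℓ ≡ 1 (mod k), 1 ≤ ℓ ≤ m} C(m−1, ℓ−1)·f_k(n−ℓ) − Σ_{ℓ ≡ 0 (mod k), k ≤ ℓ ≤ m} C(m−1, ℓ−1)·f_k(n−ℓ). (Equivalently f_k(m,n) = C(m−1,0)f_k(n−1) − C(m−1,k−1)f_k(n−k) + C(m−1,k)f_k(n−k−1) − C(m−1,2k−1)f_k(n−2k) + C(m−1,2k)f_k(n−2k−1) − ... .) -/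
/-!
Let `A_ℓ` be the set of `w ∈ S_n` with `w(1) = m`, `w(1) > ⋯ > w(ℓ)` and no `k`-descent starting
after position `ℓ`. Such a `w` is determined by the other `ℓ - 1` values of its decreasing prefix,
all below `m`, and by the relative order of its suffix, which must avoid `k`-descents; hence
`|A_ℓ| = C(m-1, ℓ-1) f_k(n-ℓ)`.

If `r` is the length of the initial decreasing run of `w`, then `w ∈ A_ℓ` iff `ℓ ≤ r < ℓ + k` and
`w` has no `k`-descent starting after `r`. The window `(r - k, r]` contains exactly one
`ℓ ≡ 1 (mod k)`, and one `ℓ ≡ 0 (mod k)` with `ℓ ≥ k` exactly when `r ≥ k`. So the alternating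
sum counts the `w` with `w(1) = m` and no `k`-descent after a run of length `r < k`, which are
exactly the `k`-descent avoiding permutations with `w(1) = m`.
-/

open Finset Equiv

namespace KDescent

section Sequence

variable {k N ℓ s : ℕ} {u : ℕ → ℕ}

lemma strictAntiOn_Icc_add_iff (i L : ℕ) :
    StrictAntiOn u (Set.Icc i (i + L)) ↔ ∀ j < L, u (i + j + 1) < u (i + j) := by
  refine ⟨fun h j hj => h ⟨by omega, by omega⟩ ⟨by omega, by omega⟩ (by omega),
    fun h => strictAntiOn_of_add_one_lt Set.ordConnected_Icc fun x _ hx hx1 => ?_⟩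
  obtain ⟨j, rfl⟩ : ∃ j, x = i + j := ⟨x - i, by grind⟩
  exact h j (by grind)

def NoKDescentFrom (k N : ℕ) (u : ℕ → ℕ) (s : ℕ) : Prop :=
  ∀ i, s ≤ i → i + k ≤ N + 1 → ¬ StrictAntiOn u (Set.Icc i (i + (k - 1)))

lemma NoKDescentFrom.mono {s t : ℕ} (hst : s ≤ t) (h : NoKDescentFrom k N u s) :
    NoKDescentFrom k N u t :=
  fun i hi => h i (hst.trans hi)

open scoped Classical in
noncomputable def runLength (N : ℕ) (u : ℕ → ℕ) : ℕ :=
  Nat.findGreatest (fun ℓ => StrictAntiOn u (Set.Icc 1 ℓ)) N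

variable (N u) in
lemma runLength_le : runLength N u ≤ N := by
  classical
  exact Nat.findGreatest_le N

variable (N u) in
lemma strictAntiOn_runLength : StrictAntiOn u (Set.Icc 1 (runLength N u)) := by
  classical
  exact Nat.findGreatest_spec (P := fun ℓ => StrictAntiOn u (Set.Icc 1 ℓ)) (Nat.zero_le N)
    (fun x hx => absurd hx.2 (by have := hx.1; omega))

lemma le_runLength_iff (hℓ : ℓ ≤ N) :
    ℓ ≤ runLength N u ↔ StrictAntiOn u (Set.Icc 1 ℓ) := by
  classical
  exact ⟨fun h => (strictAntiOn_runLength N u).mono (Set.Icc_subset_Icc_right h),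
    Nat.le_findGreatest (P := fun ℓ => StrictAntiOn u (Set.Icc 1 ℓ)) hℓ⟩

lemma one_le_runLength (hN : 1 ≤ N) : 1 ≤ runLength N u :=
  (le_runLength_iff hN).2 (by simp)

lemma apply_runLength_le (h : runLength N u < N) :
    u (runLength N u) ≤ u (runLength N u + 1) := by
  set r := runLength N u
  by_contra! hlt
  have hr : 1 ≤ r := one_le_runLength (by omega)
  have hrun : StrictAntiOn u (Set.Icc 1 (1 + r)) := by
    rw [strictAntiOn_Icc_add_iff]
    intro j hj
    rcases Nat.lt_or_ge (j + 1) r with hj' | hj'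
    · exact strictAntiOn_runLength N u ⟨by omega, by omega⟩ ⟨by omega, by omega⟩ (by omega)
    · rwa [show 1 + j = r by omega]
  have := (le_runLength_iff (u := u) (show 1 + r ≤ N by omega)).2 hrun
  omega

/-- A `k`-descent starting inside the initial run either lies in the run or crosses its end,
where the sequence ascends. -/
lemma noKDescentFrom_iff_runLength (hk : 2 ≤ k) (hs : 1 ≤ s) (hsr : s ≤ runLength N u + 1) :
    NoKDescentFrom k N u s ↔
      runLength N u + 2 ≤ s + k ∧ NoKDescentFrom k N u (runLength N u + 1) := by
  set r := runLength N u
  have hrN : r ≤ N := runLength_le N u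
  refine ⟨fun h => ⟨?_, h.mono hsr⟩, fun ⟨hrk, h⟩ i hi hiN => ?_⟩
  · by_contra! hlt
    exact h s le_rfl (by omega)
      ((strictAntiOn_runLength N u).mono (Set.Icc_subset_Icc hs (by omega)))
  · rcases Nat.lt_or_ge r i with hri | hri
    · exact h i hri hiN
    · intro hdesc
      have := hdesc ⟨hri, by omega⟩ ⟨by omega, by omega⟩ (by omega : r < r + 1)
      have : u r ≤ u (r + 1) := apply_runLength_le (by omega)
      omega

lemma runLength_le_apply_one (hpos : ∀ i, 1 ≤ i → i ≤ N → 1 ≤ u i) :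
    runLength N u ≤ u 1 := by
  set r := runLength N u
  have hrN : r ≤ N := runLength_le N u
  have hdrop : ∀ j, j < r → u (j + 1) + j ≤ u 1 := by
    intro j
    induction j with
    | zero => simp
    | succ j ih =>
      intro hj
      have := strictAntiOn_runLength N u
        (a := j + 1) ⟨by omega, by omega⟩ (b := j + 1 + 1) ⟨by omega, by omega⟩ (by omega)
      have := ih (by omega)
      omega
  rcases Nat.eq_zero_or_pos r with h0 | hr
  · omega
  · have := hdrop (r - 1) (by omega)
    have := hpos r (by omega) hrN
    rw [Nat.sub_add_cancel hr] at *
    omega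

lemma noKDescentFrom_shift {v : ℕ → ℕ} (hℓ : ℓ ≤ N)
    (horder : ∀ i j, 1 ≤ i → i ≤ N - ℓ → 1 ≤ j → j ≤ N - ℓ →
      (u (ℓ + i) < u (ℓ + j) ↔ v i < v j)) :
    NoKDescentFrom k N u (ℓ + 1) ↔ NoKDescentFrom k (N - ℓ) v 1 := by
  have window : ∀ i, 1 ≤ i → i + k ≤ N - ℓ + 1 →
      (StrictAntiOn u (Set.Icc (ℓ + i) (ℓ + i + (k - 1))) ↔
        StrictAntiOn v (Set.Icc i (i + (k - 1)))) := by
    intro i hi hik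
    simp only [strictAntiOn_Icc_add_iff]
    refine forall₂_congr fun j hj => ?_
    rw [show ℓ + i + j + 1 = ℓ + (i + j + 1) by omega,
      show ℓ + i + j = ℓ + (i + j) by omega]
    exact horder _ _ (by omega) (by omega) (by omega) (by omega)
  constructor
  · intro h i hi hik
    rw [← window i hi (by omega)]
    exact h (ℓ + i) (by omega) (by omega)
  · intro h i hi hik
    obtain ⟨i, rfl⟩ : ∃ i', i = ℓ + i' := ⟨i - ℓ, by omega⟩
    rw [window i (by omega) (by omega)]
    exact h i (by omega) (by omega)

end Sequence

section Window

variable {k r m : ℕ}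

lemma eq_of_mod_eq_of_window {ℓ ℓ' : ℕ} (h : ℓ % k = ℓ' % k) (hℓ : ℓ ≤ r)
    (hℓk : r < ℓ + k) (hℓ' : ℓ' ≤ r) (hℓ'k : r < ℓ' + k) : ℓ = ℓ' :=
  Nat.ModEq.eq_of_abs_lt h (abs_sub_lt_iff.2 ⟨by omega, by omega⟩)

lemma sub_mod_sub_mod_eq {c : ℕ} (hcr : c ≤ r) : (r - (r - c) % k) % k = c % k := by
  have := Nat.mod_add_div (r - c) k
  rw [show r - (r - c) % k = c + k * ((r - c) / k) by omega, Nat.add_mul_mod_self_left]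

lemma card_window_mod_eq_one (hk : 2 ≤ k) (hr : 1 ≤ r) (hrm : r ≤ m) :
    #{ℓ ∈ {ℓ ∈ Icc 1 m | ℓ % k = 1} | ℓ ≤ r ∧ r < ℓ + k} = 1 := by
  have hmod : (r - (r - 1) % k) % k = 1 := by
    rw [sub_mod_sub_mod_eq hr, Nat.mod_eq_of_lt (by omega)]
  have hlt : (r - 1) % k < k := Nat.mod_lt _ (by omega)
  refine card_eq_one.2
    ⟨r - (r - 1) % k, eq_singleton_iff_unique_mem.2 ⟨?_, fun ℓ hℓ => ?_⟩⟩
  · have hpos : r - (r - 1) % k ≠ 0 := fun h0 => by simp [h0] at hmod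
    simp only [mem_filter, mem_Icc]
    exact ⟨⟨⟨by omega, by omega⟩, hmod⟩, by omega, by omega⟩
  · simp only [mem_filter, mem_Icc] at hℓ
    exact eq_of_mod_eq_of_window (hℓ.1.2.trans hmod.symm) hℓ.2.1 hℓ.2.2 (by omega) (by omega)

lemma card_window_mod_eq_zero (hk : 0 < k) (hrm : r ≤ m) :
    #{ℓ ∈ {ℓ ∈ Icc k m | ℓ % k = 0} | ℓ ≤ r ∧ r < ℓ + k} =
      if k ≤ r then 1 else 0 := by
  split_ifs with hkr
  · have hmod : (r - r % k) % k = 0 := by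
      simpa using sub_mod_sub_mod_eq (k := k) (Nat.zero_le r)
    have hlt : r % k < k := Nat.mod_lt _ hk
    have hge : k ≤ r - r % k := by
      have := Nat.mod_add_div r k
      have : k ≤ k * (r / k) := Nat.le_mul_of_pos_right k ((Nat.one_le_div_iff hk).2 hkr)
      omega
    refine card_eq_one.2 ⟨r - r % k, eq_singleton_iff_unique_mem.2 ⟨?_, fun ℓ hℓ => ?_⟩⟩
    · simp only [mem_filter, mem_Icc]
      exact ⟨⟨⟨hge, by omega⟩, hmod⟩, by omega, by omega⟩
    · simp only [mem_filter, mem_Icc] at hℓ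
      exact eq_of_mod_eq_of_window (hℓ.1.2.trans hmod.symm) hℓ.2.1 hℓ.2.2
        (by omega) (by omega)
  · refine card_eq_zero.2 (filter_eq_empty_iff.2 fun ℓ hℓ h => ?_)
    simp only [mem_filter, mem_Icc] at hℓ
    omega

end Window

variable {k m n ℓ : ℕ}

lemma kDescentSet_eq_empty_iff (w : Perm (Fin n)) :
    kDescentSet k n w = ∅ ↔ NoKDescentFrom k n (permVal n w) 1 := by
  simp only [kDescentSet, filter_eq_empty_iff, mem_Icc, NoKDescentFrom,
    strictAntiOn_Icc_add_iff]
  exact ⟨fun h i hi hik => h ⟨hi, by omega⟩, fun h i hi => h i hi.1 (by omega)⟩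

lemma permVal_add_one (w : Perm (Fin n)) {i : ℕ} (hi : i < n) :
    permVal n w (i + 1) = (w ⟨i, hi⟩ : ℕ) + 1 := by
  simp [permVal, hi]

def splitPositions (h : ℓ ≤ n) : Fin n ≃ Fin ℓ ⊕ Fin (n - ℓ) :=
  (finCongr (Nat.add_sub_cancel' h).symm).trans finSumFinEquiv.symm

@[simp]
lemma splitPositions_symm_inl (h : ℓ ≤ n) (i : Fin ℓ) :
    (splitPositions h).symm (.inl i) = Fin.castLE h i := by
  ext; simp [splitPositions]

@[simp]
lemma val_splitPositions_symm_inr (h : ℓ ≤ n) (j : Fin (n - ℓ)) :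
    ((splitPositions h).symm (.inr j) : ℕ) = ℓ + j := by
  simp [splitPositions]

lemma le_of_card_eq {P : Finset (Fin n)} (hP : #P = ℓ) : ℓ ≤ n :=
  hP ▸ (card_le_univ P).trans_eq (Fintype.card_fin n)

lemma card_compl_of_card_eq {P : Finset (Fin n)} (hP : #P = ℓ) : #Pᶜ = n - ℓ := by
  rw [card_compl, Fintype.card_fin, hP]

def splitValues (P : Finset (Fin n)) (hP : #P = ℓ) : Fin ℓ ⊕ Fin (n - ℓ) ≃ Fin n :=
  (Equiv.sumCongr (P.orderIsoOfFin hP).toEquiv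
    ((Pᶜ.orderIsoOfFin (card_compl_of_card_eq hP)).toEquiv.trans
      (Equiv.subtypeEquivRight fun _ => mem_compl))).trans (Equiv.sumCompl (· ∈ P))

/-- The permutation listing `P` in decreasing order, followed by `Pᶜ` arranged in the
relative order of `v`. -/
def glue (P : Finset (Fin n)) (hP : #P = ℓ) (v : Perm (Fin (n - ℓ))) : Perm (Fin n) :=
  (splitPositions (le_of_card_eq hP)).trans
    ((Equiv.sumCongr Fin.revPerm v).trans (splitValues P hP))

lemma glue_castLE (P : Finset (Fin n)) (hP : #P = ℓ) (v : Perm (Fin (n - ℓ))) (i : Fin ℓ) :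
    glue P hP v (Fin.castLE (le_of_card_eq hP) i) = P.orderEmbOfFin hP (Fin.rev i) := by
  rw [← splitPositions_symm_inl, glue, trans_apply, apply_symm_apply]
  simp [splitValues]

lemma glue_splitPositions_symm_inr (P : Finset (Fin n)) (hP : #P = ℓ)
    (v : Perm (Fin (n - ℓ))) (j : Fin (n - ℓ)) :
    glue P hP v ((splitPositions (le_of_card_eq hP)).symm (.inr j)) =
      Pᶜ.orderEmbOfFin (card_compl_of_card_eq hP) (v j) := by
  simp [glue, splitValues]

lemma glue_congr {P Q : Finset (Fin n)} (hPQ : P = Q) (hP : #P = ℓ) (hQ : #Q = ℓ)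
    (v : Perm (Fin (n - ℓ))) : glue P hP v = glue Q hQ v := by
  subst hPQ; rfl

def firstValues (w : Perm (Fin n)) (h : ℓ ≤ n) : Finset (Fin n) :=
  univ.map ((Fin.castLEEmb h).trans w.toEmbedding)

lemma card_firstValues (w : Perm (Fin n)) (h : ℓ ≤ n) : #(firstValues w h) = ℓ := by
  simp [firstValues]

lemma apply_mem_firstValues_iff (w : Perm (Fin n)) (h : ℓ ≤ n) (x : Fin n) :
    w x ∈ firstValues w h ↔ (x : ℕ) < ℓ := by
  simp only [firstValues, mem_map, mem_univ, true_and, Function.Embedding.trans_apply,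
    Fin.castLEEmb_apply, Equiv.coe_toEmbedding, EmbeddingLike.apply_eq_iff_eq]
  exact ⟨fun ⟨i, hi⟩ => hi ▸ i.isLt, fun hx => ⟨⟨x, hx⟩, rfl⟩⟩

/-- The relative order of the values of `w` after position `ℓ`. -/
noncomputable def suffixPattern (w : Perm (Fin n)) (h : ℓ ≤ n) : Perm (Fin (n - ℓ)) :=
  Equiv.ofBijective
    (fun j => ((firstValues w h)ᶜ.orderIsoOfFin
      (card_compl_of_card_eq (card_firstValues w h))).symm
        ⟨w ((splitPositions h).symm (.inr j)), by simp [apply_mem_firstValues_iff]⟩)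
    (Finite.injective_iff_bijective.mp fun i j hij => by simpa using hij)

lemma orderEmbOfFin_suffixPattern (w : Perm (Fin n)) (h : ℓ ≤ n) (j : Fin (n - ℓ)) :
    (firstValues w h)ᶜ.orderEmbOfFin (card_compl_of_card_eq (card_firstValues w h))
      (suffixPattern w h j) = w ((splitPositions h).symm (.inr j)) := by
  simp [suffixPattern, ← coe_orderIsoOfFin_apply]

lemma firstValues_glue (P : Finset (Fin n)) (hP : #P = ℓ) (v : Perm (Fin (n - ℓ))) :
    firstValues (glue P hP v) (le_of_card_eq hP) = P := by
  refine eq_of_subset_of_card_le (fun x hx => ?_) (by rw [card_firstValues, hP])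
  obtain ⟨i, -, rfl⟩ := mem_map.mp hx
  simpa using glue_castLE P hP v i ▸ orderEmbOfFin_mem P hP _

lemma suffixPattern_glue (P : Finset (Fin n)) (hP : #P = ℓ) (v : Perm (Fin (n - ℓ))) :
    suffixPattern (glue P hP v) (le_of_card_eq hP) = v := by
  ext j : 1
  have h := orderEmbOfFin_suffixPattern (glue P hP v) (le_of_card_eq hP) j
  rw [glue_splitPositions_symm_inr] at h
  simp only [firstValues_glue] at h
  exact (Pᶜ.orderEmbOfFin _).injective h

lemma glue_firstValues_suffixPattern (w : Perm (Fin n)) (h : ℓ ≤ n)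
    (hw : StrictAnti fun i : Fin ℓ => w (Fin.castLE h i)) :
    glue (firstValues w h) (card_firstValues w h) (suffixPattern w h) = w := by
  have hP := card_firstValues w h
  have hdec : (fun i => w (Fin.castLE h (Fin.rev i))) = (firstValues w h).orderEmbOfFin hP :=
    orderEmbOfFin_unique hP (fun i => (apply_mem_firstValues_iff w h _).2 (Fin.rev i).isLt)
      (hw.comp Fin.rev_strictAnti)
  ext x : 1
  obtain ⟨y, rfl⟩ := (splitPositions h).symm.surjective x
  rcases y with i | j
  · rw [splitPositions_symm_inl, glue_castLE, ← hdec]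
    simp only [Fin.rev_rev]
  · rw [glue_splitPositions_symm_inr, orderEmbOfFin_suffixPattern]

lemma strictAntiOn_permVal_iff (w : Perm (Fin n)) (h : ℓ ≤ n) :
    StrictAntiOn (permVal n w) (Set.Icc 1 ℓ) ↔
      StrictAnti fun i : Fin ℓ => w (Fin.castLE h i) := by
  constructor
  · intro hw i j hij
    have := hw (a := i + 1) ⟨by omega, by omega⟩ (b := j + 1) ⟨by omega, by omega⟩
      (by simpa using hij)
    rwa [permVal_add_one w (by omega), permVal_add_one w (by omega), add_lt_add_iff_right,
      Fin.val_fin_lt] at this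
  · intro hw i hi j hj hij
    obtain ⟨i, rfl⟩ : ∃ i', i = i' + 1 := ⟨i - 1, by grind⟩
    obtain ⟨j, rfl⟩ : ∃ j', j = j' + 1 := ⟨j - 1, by grind⟩
    have := @hw ⟨i, by grind⟩ ⟨j, by grind⟩ (by simpa using hij)
    rw [permVal_add_one w (by grind), permVal_add_one w (by grind)]
    simpa using this

lemma noKDescentFrom_iff_of_suffix (w : Perm (Fin n)) (v : Perm (Fin (n - ℓ)))
    (h : ℓ ≤ n) (e : Fin (n - ℓ) ↪o Fin n)
    (hwv : ∀ j, w ((splitPositions h).symm (.inr j)) = e (v j)) :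
    NoKDescentFrom k n (permVal n w) (ℓ + 1) ↔ kDescentSet k (n - ℓ) v = ∅ := by
  have hval : ∀ i (hi : i < n - ℓ),
      permVal n w (ℓ + (i + 1)) = (e (v ⟨i, hi⟩) : ℕ) + 1 := by
    intro i hi
    rw [← add_assoc, permVal_add_one w (by omega), ← hwv]
    congr 3
  rw [kDescentSet_eq_empty_iff]
  refine noKDescentFrom_shift h fun i j hi1 hi hj1 hj => ?_
  obtain ⟨i, rfl⟩ : ∃ i', i = i' + 1 := ⟨i - 1, by omega⟩
  obtain ⟨j, rfl⟩ : ∃ j', j = j' + 1 := ⟨j - 1, by omega⟩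
  rw [hval i (by omega), hval j (by omega), permVal_add_one v (by omega),
    permVal_add_one v (by omega)]
  simp

lemma permVal_one_glue_insert {x : Fin n} {S : Finset (Fin n)} (hS : S ⊆ Iio x)
    (hP : #(insert x S) = ℓ) (v : Perm (Fin (n - ℓ))) :
    permVal n (glue (insert x S) hP v) 1 = x + 1 := by
  have hℓ : 0 < ℓ := hP ▸ card_pos.2 (insert_nonempty x S)
  have hx : (insert x S).max' (insert_nonempty x S) = x :=
    le_antisymm (max'_le _ _ _ fun y hy => (mem_insert.1 hy).elim le_of_eq
      fun hy => (mem_Iio.1 (hS hy)).le) (le_max' _ _ (mem_insert_self x S))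
  rw [permVal_add_one _ (by omega : 0 < n), show (⟨0, _⟩ : Fin n) =
    Fin.castLE (le_of_card_eq hP) ⟨0, hℓ⟩ from rfl, glue_castLE]
  simp only [Fin.rev, zero_add, add_left_inj]
  rw [orderEmbOfFin_last hP hℓ, hx]

lemma apply_zero_eq_of_permVal_one {w : Perm (Fin n)} {x : Fin n}
    (hw : permVal n w 1 = x + 1) : w ⟨0, by omega⟩ = x := by
  rw [permVal_add_one w (by omega : 0 < n)] at hw
  exact Fin.ext (by omega)

lemma mem_firstValues_of_permVal_one {w : Perm (Fin n)} {x : Fin n} (hℓ : 1 ≤ ℓ) (h : ℓ ≤ n)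
    (hw : permVal n w 1 = x + 1) : x ∈ firstValues w h :=
  apply_zero_eq_of_permVal_one hw ▸ (apply_mem_firstValues_iff w h _).2 hℓ

open scoped Classical in
noncomputable def decreasingPrefix (k n ℓ m : ℕ) : Finset (Perm (Fin n)) :=
  {w | permVal n w 1 = m ∧ StrictAntiOn (permVal n w) (Set.Icc 1 ℓ) ∧
    NoKDescentFrom k n (permVal n w) (ℓ + 1)}

lemma glue_mem_decreasingPrefix {x : Fin n} {S : Finset (Fin n)} (hS : S ⊆ Iio x)
    (hP : #(insert x S) = ℓ) {v : Perm (Fin (n - ℓ))} (hv : kDescentSet k (n - ℓ) v = ∅) :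
    glue (insert x S) hP v ∈ decreasingPrefix k n ℓ (x + 1) := by
  classical
  have h := le_of_card_eq hP
  simp only [decreasingPrefix, mem_filter, mem_univ, true_and]
  refine ⟨permVal_one_glue_insert hS hP v, (strictAntiOn_permVal_iff _ h).2 fun i j hij => ?_,
    (noKDescentFrom_iff_of_suffix _ v h _ (glue_splitPositions_symm_inr _ _ v)).2 hv⟩
  dsimp only
  rw [glue_castLE, glue_castLE]
  exact (orderEmbOfFin _ _).strictMono (Fin.rev_strictAnti hij)

lemma erase_firstValues_mem_powersetCard {x : Fin n} (hℓ : 1 ≤ ℓ) (h : ℓ ≤ n)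
    {w : Perm (Fin n)} (hw : w ∈ decreasingPrefix k n ℓ (x + 1)) :
    (firstValues w h).erase x ∈ powersetCard (ℓ - 1) (Iio x) := by
  classical
  simp only [decreasingPrefix, mem_filter, mem_univ, true_and] at hw
  obtain ⟨hw1, hanti, -⟩ := hw
  refine mem_powersetCard.2 ⟨fun y hy => ?_, ?_⟩
  · obtain ⟨hyx, hy⟩ := mem_erase.1 hy
    obtain ⟨i, -, rfl⟩ := mem_map.1 hy
    rw [mem_Iio, ← apply_zero_eq_of_permVal_one hw1] at *
    exact lt_of_le_of_ne ((strictAntiOn_permVal_iff w h).1 hanti |>.antitone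
      (show (⟨0, hℓ⟩ : Fin ℓ) ≤ i from Nat.zero_le _)) hyx
  · rw [card_erase_of_mem (mem_firstValues_of_permVal_one hℓ h hw1), card_firstValues]

lemma card_decreasingPrefix (x : Fin n) (hℓ : 1 ≤ ℓ) (hℓx : ℓ ≤ x + 1) :
    #(decreasingPrefix k n ℓ (x + 1)) = (x : ℕ).choose (ℓ - 1) * fK k (n - ℓ) := by
  classical
  have h : ℓ ≤ n := by omega
  have hx : ∀ S ∈ powersetCard (ℓ - 1) (Iio x), x ∉ S := fun S hS hxS =>
    lt_irrefl x (mem_Iio.1 ((mem_powersetCard.1 hS).1 hxS))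
  have hcard : ∀ S ∈ powersetCard (ℓ - 1) (Iio x), #(insert x S) = ℓ := fun S hS => by
    rw [card_insert_of_notMem (hx S hS), (mem_powersetCard.1 hS).2]
    omega
  rw [show (x : ℕ).choose (ℓ - 1) * fK k (n - ℓ) = #(powersetCard (ℓ - 1) (Iio x) ×ˢ
      ({v : Perm (Fin (n - ℓ)) | kDescentSet k (n - ℓ) v = ∅} : Finset _)) by
    rw [card_product, card_powersetCard, Fin.card_Iio]; rfl]
  symm
  refine card_bij' (fun p hp => glue (insert x p.1) (hcard p.1 (mem_product.1 hp).1) p.2)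
    (fun w _ => ((firstValues w h).erase x, suffixPattern w h)) (fun p hp => ?_)
    (fun w hw => ?_) (fun p hp => ?_) (fun w hw => ?_)
  · obtain ⟨hS, hv⟩ := mem_product.1 hp
    exact glue_mem_decreasingPrefix (mem_powersetCard.1 hS).1 _ (mem_filter.1 hv).2
  · refine mem_product.2 ⟨erase_firstValues_mem_powersetCard hℓ h hw, mem_filter.2
      ⟨mem_univ _, (noKDescentFrom_iff_of_suffix w _ h _
        fun j => (orderEmbOfFin_suffixPattern w h j).symm).1 (mem_filter.1 hw).2.2.2⟩⟩
  · rw [firstValues_glue, suffixPattern_glue, erase_insert (hx p.1 (mem_product.1 hp).1)]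
  · obtain ⟨hw1, hanti, -⟩ := (mem_filter.1 hw).2
    rw [glue_congr (insert_erase (mem_firstValues_of_permVal_one hℓ h hw1)) _
      (card_firstValues w h)]
    exact glue_firstValues_suffixPattern w h ((strictAntiOn_permVal_iff w h).1 hanti)

noncomputable def initialRun (w : Perm (Fin n)) : ℕ := runLength n (permVal n w)

open scoped Classical in
noncomputable def avoidingAfterRun (k m n : ℕ) : Finset (Perm (Fin n)) :=
  {w | permVal n w 1 = m ∧ NoKDescentFrom k n (permVal n w) (initialRun w + 1)}

lemma initialRun_mem_Icc {w : Perm (Fin n)} (hw : w ∈ avoidingAfterRun k m n) (hn : 1 ≤ n) :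
    initialRun w ∈ Icc 1 m := by
  classical
  refine mem_Icc.2 ⟨one_le_runLength hn, ?_⟩
  rw [← (mem_filter.1 hw).2.1]
  refine runLength_le_apply_one fun i hi1 hin => ?_
  rw [show i = (i - 1) + 1 by omega, permVal_add_one w (by omega)]
  omega

lemma fKm_eq_card_filter (hk : 2 ≤ k) :
    fKm k m n = #{w ∈ avoidingAfterRun k m n | initialRun w < k} := by
  classical
  rw [fKm, dIm, avoidingAfterRun, filter_filter]
  refine congrArg card (filter_congr fun w _ => ?_)
  rw [kDescentSet_eq_empty_iff, initialRun,
    noKDescentFrom_iff_runLength hk le_rfl (Nat.le_add_left 1 _),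
    show ∀ r, r + 2 ≤ 1 + k ↔ r < k from fun r => by omega]
  tauto

lemma choose_mul_fK_eq_card_filter (hk : 2 ≤ k) (hℓ : 1 ≤ ℓ) (hℓm : ℓ ≤ m) (hmn : m ≤ n) :
    (m - 1).choose (ℓ - 1) * fK k (n - ℓ) =
      #{w ∈ avoidingAfterRun k m n | ℓ ≤ initialRun w ∧ initialRun w < ℓ + k} := by
  classical
  obtain ⟨x, rfl⟩ : ∃ x : Fin n, m = x + 1 := ⟨⟨m - 1, by omega⟩, by simp; omega⟩
  rw [Nat.add_sub_cancel, ← card_decreasingPrefix x hℓ hℓm, decreasingPrefix,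
    avoidingAfterRun, filter_filter]
  refine congrArg card (filter_congr fun w _ => ?_)
  rw [← le_runLength_iff (show ℓ ≤ n by omega), initialRun]
  constructor
  · rintro ⟨h1, hℓr, hnd⟩
    obtain ⟨hrk, hnd'⟩ := (noKDescentFrom_iff_runLength hk (by omega) (by omega)).1 hnd
    exact ⟨⟨h1, hnd'⟩, hℓr, by omega⟩
  · rintro ⟨⟨h1, hnd⟩, hℓr, hrk⟩
    exact ⟨h1, hℓr,
      (noKDescentFrom_iff_runLength hk (by omega) (by omega)).2 ⟨by omega, hnd⟩⟩

lemma sum_choose_mul_fK_eq_sum_card (hk : 2 ≤ k) (hmn : m ≤ n) (F : Finset ℕ)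
    (hF : ∀ ℓ ∈ F, 1 ≤ ℓ ∧ ℓ ≤ m) :
    ∑ ℓ ∈ F, (m - 1).choose (ℓ - 1) * fK k (n - ℓ) =
      ∑ w ∈ avoidingAfterRun k m n, #{ℓ ∈ F | ℓ ≤ initialRun w ∧ initialRun w < ℓ + k} := by
  classical
  exact (sum_congr rfl fun ℓ hℓ =>
    choose_mul_fK_eq_card_filter hk (hF ℓ hℓ).1 (hF ℓ hℓ).2 hmn).trans
      (sum_card_bipartiteAbove_eq_sum_card_bipartiteBelow _)

lemma sum_mod_eq_one (hk : 2 ≤ k) (hn : 1 ≤ n) (hmn : m ≤ n) :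
    ∑ ℓ ∈ {ℓ ∈ Icc 1 m | ℓ % k = 1}, (m - 1).choose (ℓ - 1) * fK k (n - ℓ) =
      #(avoidingAfterRun k m n) := by
  rw [sum_choose_mul_fK_eq_sum_card hk hmn _ fun ℓ hℓ => mem_Icc.1 (mem_filter.1 hℓ).1,
    card_eq_sum_ones]
  refine sum_congr rfl fun w hw => ?_
  obtain ⟨hr1, hrm⟩ := mem_Icc.1 (initialRun_mem_Icc hw hn)
  exact card_window_mod_eq_one hk hr1 hrm

lemma sum_mod_eq_zero (hk : 2 ≤ k) (hn : 1 ≤ n) (hmn : m ≤ n) :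
    ∑ ℓ ∈ {ℓ ∈ Icc k m | ℓ % k = 0}, (m - 1).choose (ℓ - 1) * fK k (n - ℓ) =
      #{w ∈ avoidingAfterRun k m n | k ≤ initialRun w} := by
  rw [sum_choose_mul_fK_eq_sum_card hk hmn _ fun ℓ hℓ => by
      have := mem_Icc.1 (mem_filter.1 hℓ).1; omega,
    card_filter]
  exact sum_congr rfl fun w hw =>
    card_window_mod_eq_zero (by omega) (mem_Icc.1 (initialRun_mem_Icc hw hn)).2

end KDescent

/-- Proposition: alternating-sum formula for `f_k(m,n)`.
For `k ≥ 3` and `1 ≤ m ≤ n`,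
`f_k(m,n) = Σ_{ℓ ≡ 1 (k), 1 ≤ ℓ ≤ m} C(m-1,ℓ-1)·f_k(n-ℓ)
          - Σ_{ℓ ≡ 0 (k), k ≤ ℓ ≤ m} C(m-1,ℓ-1)·f_k(n-ℓ)`. -/
theorem fKm_alternating_sum (k m n : ℕ) (hk : 3 ≤ k) (hm : 1 ≤ m) (hmn : m ≤ n) :
    (fKm k m n : ℤ) =
      (∑ ℓ ∈ (Finset.Icc 1 m).filter (fun ℓ => ℓ % k = 1),
          (Nat.choose (m - 1) (ℓ - 1) : ℤ) * (fK k (n - ℓ) : ℤ)) -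
      (∑ ℓ ∈ (Finset.Icc k m).filter (fun ℓ => ℓ % k = 0),
          (Nat.choose (m - 1) (ℓ - 1) : ℤ) * (fK k (n - ℓ) : ℤ)) := by
  have hk2 : 2 ≤ k := by omega
  have hn : 1 ≤ n := hm.trans hmn
  have h1 := KDescent.sum_mod_eq_one hk2 hn hmn
  have h0 := KDescent.sum_mod_eq_zero hk2 hn hmn
  have hsplit := card_filter_add_card_filter_not (s := KDescent.avoidingAfterRun k m n)
    (fun w => KDescent.initialRun w < k)
  simp only [not_lt] at hsplit
  rw [KDescent.fKm_eq_card_filter hk2]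
  simp only [← Nat.cast_mul, ← Nat.cast_sum, h1, h0]
  omega
end

section
/- For every real number x, setting u = 2πx/(3√3), one has the identity (2π/(3√3)) · ( Σ_{j≥0} u^{3j}/(3j)! − Σ_{j≥0} u^{3j+2}/(3j+2)! ) = (4π/9) · e^{−πx/(3√3)} · sin((x+1)π/3). (This expresses the density φ_3(x) = (1/r_3)(1 − (x/r_3)²/2! + (x/r_3)³/3! − (x/r_3)⁵/5! + (x/r_3)⁶/6! − ...) with r_3 = 3√3/(2π) in closed form.) -/
/-!
Root-of-unity filter. For a primitive cube root of unity `ω`, the coefficient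
`((1 - ω) ωⁿ + (1 - ω²) ω²ⁿ) / 3` is `1, 0, -1` according as `n ≡ 0, 1, 2 (mod 3)`, so the
series equals `((1 - ω) e^{ωu} + (1 - ω²) e^{ω²u}) / 3`. For real `u` the second summand is the
conjugate of the first, and with `1 - ω = √3 e^{-iπ/6}` this is `(2/√3) e^{-u/2} sin(√3u/2 + π/3)`.
Substituting `u = 2πx/(3√3)` gives the closed form.
-/

open Complex ComplexConjugate Nat

theorem Complex.hasSum_three_mul_sub_three_mul_add_two {ω : ℂ} (hω : ω ^ 2 + ω + 1 = 0)
    (z : ℂ) :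
    HasSum (fun j : ℕ => z ^ (3 * j) / (3 * j)! - z ^ (3 * j + 2) / (3 * j + 2)!)
      (((1 - ω) * cexp (ω * z) + (1 - ω ^ 2) * cexp (ω ^ 2 * z)) / 3) := by
  have h := (((NormedSpace.expSeries_div_hasSum_exp (ω * z)).mul_left (1 - ω)).add
    ((NormedSpace.expSeries_div_hasSum_exp (ω ^ 2 * z)).mul_left (1 - ω ^ 2))).div_const 3
  rw [← exp_eq_exp_ℂ] at h
  refine ((Nat.divModEquiv 3).symm.hasSum_iff.mpr h).prod_fiberwise fun j => ?_
  have hω3 : ω ^ 3 = 1 := by linear_combination (ω - 1) * hω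
  have hpow (r : ℕ) : ω ^ (j * 3 + r) = ω ^ r := by
    rw [pow_add, pow_mul', hω3, one_pow, one_mul]
  convert! hasSum_fintype (_ : Fin 3 → ℂ) using 1
  simp only [Function.comp_apply, Nat.divModEquiv_symm_apply, Fin.sum_univ_three, Fin.val_zero,
    Fin.val_one, Fin.val_two, mul_pow, pow_right_comm ω 2, hpow]
  simp only [add_zero, pow_zero, one_pow, pow_one, mul_comm j 3]
  -- the values `1, 0, -1` minus the three coefficients, each divided by `ω ^ 2 + ω + 1`
  linear_combination (z ^ (3 * j) / (3 * j)! / 3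
    + ω * (ω - 1) * (z ^ (3 * j + 1) / (3 * j + 1)!) / 3
    - (-ω ^ 4 + ω ^ 3 + ω ^ 2 - 3 * ω + 3) * (z ^ (3 * j + 2) / (3 * j + 2)!) / 3) * hω

lemma sqrt_three_sq : √3 ^ 2 = 3 := Real.sq_sqrt (by norm_num)

noncomputable def cubeRootOfUnity : ℂ := ⟨-1 / 2, √3 / 2⟩

lemma cubeRootOfUnity_sq : cubeRootOfUnity ^ 2 = conj cubeRootOfUnity := by
  apply Complex.ext
  · simp only [cubeRootOfUnity, sq, mul_re, conj_re]
    linear_combination (-1 / 4 : ℝ) * sqrt_three_sq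
  · simp only [cubeRootOfUnity, sq, mul_im, conj_im]
    ring

lemma cubeRootOfUnity_sq_add_self_add_one : cubeRootOfUnity ^ 2 + cubeRootOfUnity + 1 = 0 := by
  apply Complex.ext
  · simp only [cubeRootOfUnity, sq, add_re, mul_re, one_re, zero_re]
    linear_combination (-1 / 4 : ℝ) * sqrt_three_sq
  · simp only [cubeRootOfUnity, sq, add_im, mul_im, one_im, add_zero, zero_im]
    ring

lemma re_one_sub_cubeRootOfUnity_mul_exp (u : ℝ) :
    ((1 - cubeRootOfUnity) * cexp (cubeRootOfUnity * u)).re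
      = √3 * Real.exp (-u / 2) * Real.sin (√3 * u / 2 + Real.pi / 3) := by
  simp only [cubeRootOfUnity, mul_re, sub_re, one_re, exp_re, ofReal_re, ofReal_im, mul_zero,
    sub_zero, mul_im, zero_add, sub_im, one_im, zero_sub, exp_im, neg_mul, sub_neg_eq_add,
    Real.sin_add, Real.cos_pi_div_three, one_div, Real.sin_pi_div_three]
  rw [show -1 / 2 * u = -u / 2 by ring, show √3 / 2 * u = √3 * u / 2 by ring]
  linear_combination (-(Real.exp (-u / 2) * Real.cos (√3 * u / 2)) / 2) * sqrt_three_sq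

theorem Real.hasSum_three_mul_sub_three_mul_add_two (u : ℝ) :
    HasSum (fun j : ℕ => u ^ (3 * j) / (3 * j)! - u ^ (3 * j + 2) / (3 * j + 2)!)
      (2 / √3 * Real.exp (-u / 2) * Real.sin (√3 * u / 2 + Real.pi / 3)) := by
  rw [← Complex.hasSum_ofReal]
  convert Complex.hasSum_three_mul_sub_three_mul_add_two cubeRootOfUnity_sq_add_self_add_one
    (u : ℂ) using 1
  · push_cast
    rfl
  have hconj : (1 - conj cubeRootOfUnity) * cexp (conj cubeRootOfUnity * u)
      = conj ((1 - cubeRootOfUnity) * cexp (cubeRootOfUnity * u)) := by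
    simp [← exp_conj]
  rw [cubeRootOfUnity_sq, hconj, add_conj, re_one_sub_cubeRootOfUnity_mul_exp, ← ofReal_ofNat,
    ← ofReal_div]
  congr 1
  field_simp
  rw [sqrt_three_sq]

/-- closed form for `φ_3`. For every real `x`, with
`u = 2πx/(3√3)`,
`(2π/(3√3)) · ( Σ_{j≥0} u^{3j}/(3j)! − Σ_{j≥0} u^{3j+2}/(3j+2)! )
  = (4π/9) · e^{−πx/(3√3)} · sin((x+1)π/3)`. -/
theorem phi3_closed_form (x : ℝ) :
    (2 * Real.pi / (3 * Real.sqrt 3)) *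
      ((∑' j : ℕ, (2 * Real.pi * x / (3 * Real.sqrt 3)) ^ (3 * j) /
          (Nat.factorial (3 * j) : ℝ)) -
       (∑' j : ℕ, (2 * Real.pi * x / (3 * Real.sqrt 3)) ^ (3 * j + 2) /
          (Nat.factorial (3 * j + 2) : ℝ)))
      = (4 * Real.pi / 9) * Real.exp (-(Real.pi * x) / (3 * Real.sqrt 3)) *
          Real.sin ((x + 1) * Real.pi / 3) := by
  set u := 2 * Real.pi * x / (3 * √3) with hu
  have hsum (k : ℕ) : Summable fun j : ℕ => u ^ (3 * j + k) / (3 * j + k)! :=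
    (Real.summable_pow_div_factorial u).comp_injective fun a b h => by omega
  have hsum0 : Summable fun j : ℕ => u ^ (3 * j) / (3 * j)! := hsum 0
  rw [← hsum0.tsum_sub (hsum 2), (Real.hasSum_three_mul_sub_three_mul_add_two u).tsum_eq]
  have hexp : -u / 2 = -(Real.pi * x) / (3 * √3) := by rw [hu]; field_simp
  have hsin : √3 * u / 2 + Real.pi / 3 = (x + 1) * Real.pi / 3 := by rw [hu]; field_simp
  rw [hexp, hsin]
  field_simp
  rw [sqrt_three_sq]
  ring
end

section
/- Let t ≥ 3 and 1 ≤ s ≤ t be fixed integers. For a positive integer n ≥ t, let 𝒴 be a uniformly random t-element subset of {1, ..., n} and let Y_s denote the s-th smallest element of 𝒴. Then for each ℓ ∈ {1,...,n}, P(Y_s = ℓ) = C(ℓ−1, s−1)·C(n−ℓ, t−s) / C(n, t); moreover, there exists a constant C > 0 (depending only on s and t) such that for all n ≥ t and all ℓ ∈ {1,...,n}, | P(Y_s = ℓ) − (1/n)·Φ_s^t(ℓ/n) | ≤ C·n^{−1.5}, where Φ_s^t(y) = (t!/((s−1)!·(t−s)!))·y^{s−1}·(1−y)^{t−s}. -/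
/-- The `s`-th smallest element of a finset of naturals (1-based: `s = 1` gives the
minimum), with junk value `0` if `s` exceeds the cardinality. -/
def nthSmallest (Y : Finset ℕ) (s : ℕ) : ℕ :=
  (Y.sort (· ≤ ·)).getD (s - 1) 0

/-- The density `Φ_s^t(y) = (t!/((s−1)!·(t−s)!))·y^{s−1}·(1−y)^{t−s}` of the `s`-th
order statistic of `t` i.i.d. uniform `[0,1]` random variables. -/
noncomputable def PhiST (s t : ℕ) (y : ℝ) : ℝ :=
  ((Nat.factorial t : ℝ) / ((Nat.factorial (s - 1) : ℝ) * (Nat.factorial (t - s) : ℝ))) *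
    y ^ (s - 1) * (1 - y) ^ (t - s)

/-!
`Y_s = ℓ` exactly when `ℓ ∈ 𝒴` and `s - 1` elements of `𝒴` lie below `ℓ`, so splitting
`𝒴 \ {ℓ}` into its parts below and above `ℓ` gives the count `C(ℓ-1, s-1) · C(n-ℓ, t-s)`.

With `a = s - 1`, `b = t - s` and `c = t!/(a! b!)`, falling factorials turn this into
`P(Y_s = ℓ) = c · (ℓ-1)^{\underline a} (n-ℓ)^{\underline b} / n^{\underline t}`, while
`Φ_s^t(ℓ/n)/n = c · ℓ^a (n-ℓ)^b / n^t`. Scaled by powers of `n`, a falling factorial and the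
matching power are products of factors in `[0, 1]` that pairwise differ by `O(1/n)`, so they
differ by `O(1/n)`; since moreover `n^{\underline t} / n^t ≥ t^{-t}` for `n ≥ t`, the error is
in fact `O(n^{-2})`.
-/

open Finset

section Counting

variable {α : Type*} [LinearOrder α] {ℓ : α}

theorem filter_lt_insert_union {A B : Finset α} (hA : ∀ x ∈ A, x < ℓ) (hB : ∀ x ∈ B, ℓ < x) :
    {y ∈ insert ℓ (A ∪ B) | y < ℓ} = A := by
  ext y
  simp only [mem_filter, mem_insert, mem_union]
  grind

theorem filter_gt_insert_union {A B : Finset α} (hA : ∀ x ∈ A, x < ℓ) (hB : ∀ x ∈ B, ℓ < x) :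
    {y ∈ insert ℓ (A ∪ B) | ℓ < y} = B := by
  ext y
  simp only [mem_filter, mem_insert, mem_union]
  grind

theorem card_insert_union_of_lt_of_gt {A B : Finset α} (hA : ∀ x ∈ A, x < ℓ)
    (hB : ∀ x ∈ B, ℓ < x) : #(insert ℓ (A ∪ B)) = #A + #B + 1 := by
  have hℓ : ℓ ∉ A ∪ B := by grind
  have hAB : Disjoint A B := disjoint_left.2 fun x hxA hxB => (hA x hxA).asymm (hB x hxB)
  rw [card_insert_of_notMem hℓ, card_union_of_disjoint hAB]

theorem insert_filter_lt_union_filter_gt {Y : Finset α} (hℓ : ℓ ∈ Y) :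
    insert ℓ ({y ∈ Y | y < ℓ} ∪ {y ∈ Y | ℓ < y}) = Y := by
  ext y
  simp only [mem_insert, mem_union, mem_filter]
  grind

theorem card_eq_card_filter_lt_add_card_filter_gt {Y : Finset α} (hℓ : ℓ ∈ Y) :
    #Y = #{y ∈ Y | y < ℓ} + #{y ∈ Y | ℓ < y} + 1 := by
  conv_lhs => rw [← insert_filter_lt_union_filter_gt hℓ]
  exact card_insert_union_of_lt_of_gt (fun x hx => (mem_filter.1 hx).2)
    (fun x hx => (mem_filter.1 hx).2)

theorem card_powersetCard_filter_card_filter_lt_eq (S : Finset α) (hℓ : ℓ ∈ S) (a b : ℕ) :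
    #{Y ∈ S.powersetCard (a + b + 1) | ℓ ∈ Y ∧ #{y ∈ Y | y < ℓ} = a} =
      (#{x ∈ S | x < ℓ}).choose a * (#{x ∈ S | ℓ < x}).choose b := by
  rw [← card_powersetCard, ← card_powersetCard, ← card_product]
  refine card_nbij' (fun Y => ({y ∈ Y | y < ℓ}, {y ∈ Y | ℓ < y}))
    (fun p => insert ℓ (p.1 ∪ p.2)) ?_ ?_ ?_ ?_
  · intro Y hY
    simp only [mem_coe, mem_filter, mem_powersetCard] at hY
    obtain ⟨⟨hYS, hYcard⟩, hℓY, hlt⟩ := hY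
    have := card_eq_card_filter_lt_add_card_filter_gt hℓY
    simp only [mem_coe, mem_product, mem_powersetCard]
    exact ⟨⟨filter_subset_filter _ hYS, hlt⟩, filter_subset_filter _ hYS, by omega⟩
  · rintro ⟨A, B⟩ hAB
    simp only [mem_coe, mem_product, mem_powersetCard] at hAB
    obtain ⟨⟨hAS, rfl⟩, hBS, rfl⟩ := hAB
    have hA (x) (hx : x ∈ A) : x < ℓ := (mem_filter.1 (hAS hx)).2
    have hB (x) (hx : x ∈ B) : ℓ < x := (mem_filter.1 (hBS hx)).2
    simp only [mem_coe, mem_filter, mem_powersetCard]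
    refine ⟨⟨insert_subset hℓ (union_subset (hAS.trans (filter_subset _ _))
      (hBS.trans (filter_subset _ _))), card_insert_union_of_lt_of_gt hA hB⟩,
      mem_insert_self _ _, by rw [filter_lt_insert_union hA hB]⟩
  · intro Y hY
    exact insert_filter_lt_union_filter_gt (mem_filter.1 hY).2.1
  · rintro ⟨A, B⟩ hAB
    simp only [mem_coe, mem_product, mem_powersetCard] at hAB
    obtain ⟨⟨hAS, -⟩, hBS, -⟩ := hAB
    have hA (x) (hx : x ∈ A) : x < ℓ := (mem_filter.1 (hAS hx)).2
    have hB (x) (hx : x ∈ B) : ℓ < x := (mem_filter.1 (hBS hx)).2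
    simp only [filter_lt_insert_union hA hB, filter_gt_insert_union hA hB]

end Counting

theorem nthSmallest_eq_nth (Y : Finset ℕ) (s : ℕ) : nthSmallest Y s = Nat.nth (· ∈ Y) (s - 1) := by
  have hY : (Set.ofPred (· ∈ Y)).Finite := Y.finite_toSet
  rw [Nat.nth_eq_getD_sort hY, nthSmallest]
  congr
  ext
  simp

theorem nthSmallest_eq_iff {Y : Finset ℕ} {s ℓ : ℕ} (hs : 1 ≤ s) (hsY : s ≤ #Y) :
    nthSmallest Y s = ℓ ↔ ℓ ∈ Y ∧ #{y ∈ Y | y < ℓ} = s - 1 := by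
  have hcount : #{y ∈ Y | y < ℓ} = Nat.count (· ∈ Y) ℓ := by
    rw [Nat.count_eq_card_filter_range]
    congr 1
    ext y
    simp [and_comm]
  have hlt : s - 1 < #Y.finite_toSet.toFinset := by rw [Finset.finite_toSet_toFinset]; omega
  rw [nthSmallest_eq_nth, hcount]
  constructor
  · rintro rfl
    exact ⟨Nat.nth_mem_of_lt_card _ hlt, Nat.count_nth_of_lt_card_finite _ hlt⟩
  · rintro ⟨hℓ, hc⟩
    rw [← hc]
    exact Nat.nth_count hℓ

theorem card_filter_nthSmallest_eq {n s t ℓ : ℕ} (hs : 1 ≤ s) (hst : s ≤ t)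
    (hℓ : ℓ ∈ Icc 1 n) :
    #{Y ∈ (Icc 1 n).powersetCard t | nthSmallest Y s = ℓ} =
      (ℓ - 1).choose (s - 1) * (n - ℓ).choose (t - s) := by
  have hlow : {x ∈ Icc 1 n | x < ℓ} = Ico 1 ℓ := by
    ext x; simp only [mem_filter, mem_Icc, mem_Ico] at hℓ ⊢; omega
  have hhigh : {x ∈ Icc 1 n | ℓ < x} = Ioc ℓ n := by
    ext x; simp only [mem_filter, mem_Icc, mem_Ioc] at hℓ ⊢; omega
  have ht : t = (s - 1) + (t - s) + 1 := by omega
  rw [filter_congr fun Y hY => nthSmallest_eq_iff hs (hst.trans (mem_powersetCard.1 hY).2.ge)]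
  rw [ht, card_powersetCard_filter_card_filter_lt_eq _ hℓ, hlow, hhigh, Nat.card_Ico,
    Nat.card_Ioc, ← ht]

theorem norm_prod_sub_prod_le_sum {ι R : Type*} [NormedCommRing R] [NormOneClass R]
    (s : Finset ι) {f g : ι → R} (hf : ∀ i ∈ s, ‖f i‖ ≤ 1) (hg : ∀ i ∈ s, ‖g i‖ ≤ 1) :
    ‖∏ i ∈ s, f i - ∏ i ∈ s, g i‖ ≤ ∑ i ∈ s, ‖f i - g i‖ := by
  classical
  induction s using Finset.induction_on with
  | empty => simp
  | insert j s hj ih =>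
    rw [prod_insert hj, prod_insert hj, sum_insert hj]
    have hfs : ‖∏ i ∈ s, f i‖ ≤ 1 :=
      (Finset.norm_prod_le _ _).trans (prod_le_one (fun _ _ => norm_nonneg _)
        fun i hi => hf i (mem_insert_of_mem hi))
    have hgj : ‖g j‖ ≤ 1 := hg j (mem_insert_self _ _)
    calc ‖f j * ∏ i ∈ s, f i - g j * ∏ i ∈ s, g i‖
        = ‖(f j - g j) * ∏ i ∈ s, f i + g j * (∏ i ∈ s, f i - ∏ i ∈ s, g i)‖ := by
          congr 1; ring
      _ ≤ ‖f j - g j‖ * ‖∏ i ∈ s, f i‖ + ‖g j‖ * ‖∏ i ∈ s, f i - ∏ i ∈ s, g i‖ :=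
          (norm_add_le _ _).trans (add_le_add (norm_mul_le _ _) (norm_mul_le _ _))
      _ ≤ ‖f j - g j‖ * 1 + 1 * ∑ i ∈ s, ‖f i - g i‖ := by
          gcongr
          exact ih (fun i hi => hf i (mem_insert_of_mem hi)) fun i hi => hg i (mem_insert_of_mem hi)
      _ = ‖f j - g j‖ + ∑ i ∈ s, ‖f i - g i‖ := by ring

theorem abs_mul_sub_mul_le {p q p' q' : ℝ} (hq : |q| ≤ 1) (hp' : |p'| ≤ 1) :
    |p * q - p' * q'| ≤ |p - p'| + |q - q'| := by
  calc |p * q - p' * q'| = |(p - p') * q + p' * (q - q')| := by ring_nf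
    _ ≤ |p - p'| * |q| + |p'| * |q - q'| := by
        rw [← abs_mul, ← abs_mul]; exact abs_add_le _ _
    _ ≤ |p - p'| + |q - q'| := by
        gcongr
        · exact mul_le_of_le_one_right (abs_nonneg _) hq
        · exact mul_le_of_le_one_left (abs_nonneg _) hp'

theorem abs_div_sub_le {u v w : ℝ} (hw : 0 < w) (hv : |v| ≤ 1) :
    |u / w - v| ≤ (|u - v| + |1 - w|) / w := by
  rw [show u / w - v = ((u - v) + v * (1 - w)) / w by field_simp; ring, abs_div, abs_of_pos hw]
  gcongr
  calc |u - v + v * (1 - w)| ≤ |u - v| + |v| * |1 - w| := by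
        rw [← abs_mul]; exact abs_add_le _ _
    _ ≤ |u - v| + |1 - w| := by gcongr; exact mul_le_of_le_one_left (abs_nonneg _) hv

theorem abs_div_pow_sub_descFactorial_div_pow_le {x y : ℝ} (m k : ℕ) (hy : 0 < y)
    (hx : 0 ≤ x) (hxy : x ≤ y) (hmy : (m : ℝ) ≤ y) :
    |(x / y) ^ k - m.descFactorial k / y ^ k| ≤ k * (|x - m| + k) / y := by
  have hfac : (m.descFactorial k : ℝ) / y ^ k = ∏ i ∈ range k, ((m - i : ℕ) : ℝ) / y := by
    rw [Nat.descFactorial_eq_prod_range, Nat.cast_prod, prod_div_distrib, prod_const, card_range]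
  have hfactor (i : ℕ) : ((m - i : ℕ) : ℝ) / y ∈ Set.Icc 0 1 :=
    ⟨by positivity, div_le_one_of_le₀ ((Nat.cast_le.2 (Nat.sub_le m i)).trans hmy) hy.le⟩
  have hgap (i : ℕ) (hi : i < k) : |x - (m - i : ℕ)| ≤ |x - m| + k := by
    have h1 : ((m - i : ℕ) : ℝ) ≤ m := Nat.cast_le.2 (Nat.sub_le m i)
    have h2 : (m : ℝ) ≤ (m - i : ℕ) + k := by exact_mod_cast (by omega : m ≤ m - i + k)
    calc |x - (m - i : ℕ)| ≤ |x - m| + |(m : ℝ) - (m - i : ℕ)| := abs_sub_le _ _ _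
      _ ≤ |x - m| + k := by
        rw [abs_of_nonneg (sub_nonneg.2 h1)]
        linarith
  rw [hfac, show (x / y) ^ k = ∏ _i ∈ range k, x / y by rw [prod_const, card_range],
    ← Real.norm_eq_abs]
  calc ‖∏ _i ∈ range k, x / y - ∏ i ∈ range k, ((m - i : ℕ) : ℝ) / y‖
      ≤ ∑ i ∈ range k, ‖x / y - ((m - i : ℕ) : ℝ) / y‖ := by
        refine norm_prod_sub_prod_le_sum _ (fun _ _ => ?_) (fun i _ => ?_)
        · rw [Real.norm_eq_abs, abs_of_nonneg (by positivity)]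
          exact div_le_one_of_le₀ hxy hy.le
        · rw [Real.norm_eq_abs, abs_of_nonneg (hfactor i).1]; exact (hfactor i).2
    _ ≤ ∑ _i ∈ range k, (|x - m| + k) / y := by
        refine sum_le_sum fun i hi => ?_
        rw [Real.norm_eq_abs, ← sub_div, abs_div, abs_of_pos hy]
        exact div_le_div_of_nonneg_right (hgap i (mem_range.1 hi)) hy.le
    _ = k * (|x - m| + k) / y := by rw [sum_const, card_range, nsmul_eq_mul, mul_div_assoc]

theorem pow_le_pow_mul_descFactorial {n k : ℕ} (hkn : k ≤ n) :
    n ^ k ≤ k ^ k * n.descFactorial k := by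
  rcases k.eq_zero_or_pos with rfl | hk
  · simp
  obtain ⟨d, rfl⟩ := Nat.exists_eq_add_of_le hkn
  calc (k + d) ^ k ≤ (k * (k + d + 1 - k)) ^ k := by
        gcongr
        rw [show k + d + 1 - k = d + 1 by omega]
        nlinarith
    _ = k ^ k * (k + d + 1 - k) ^ k := mul_pow _ _ _
    _ ≤ k ^ k * (k + d).descFactorial k := by gcongr; exact Nat.pow_sub_le_descFactorial _ _

theorem choose_mul_choose_div_choose_eq (m₁ m₂ n a b : ℕ) :
    ((m₁.choose a * m₂.choose b : ℕ) : ℝ) / n.choose (a + b + 1) =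
      (a + b + 1).factorial / (a.factorial * b.factorial) *
        (m₁.descFactorial a * m₂.descFactorial b / n.descFactorial (a + b + 1)) := by
  simp only [Nat.descFactorial_eq_factorial_mul_choose, Nat.cast_mul]
  field_simp

theorem abs_descFactorial_mul_descFactorial_div_pow_sub_le {a b n ℓ : ℕ} (hℓ1 : 1 ≤ ℓ)
    (hℓn : ℓ ≤ n) :
    |(ℓ - 1).descFactorial a / (n : ℝ) ^ a * ((n - ℓ).descFactorial b / (n : ℝ) ^ b) -
        (ℓ / n : ℝ) ^ a * ((n - ℓ : ℕ) / n : ℝ) ^ b| ≤ (a * (a + 1) + b * b) / n := by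
  have hn : (0 : ℝ) < n := by norm_cast; omega
  have hℓa : |((ℓ : ℝ) / n) ^ a| ≤ 1 := by
    rw [abs_of_nonneg (by positivity)]
    exact pow_le_one₀ (by positivity) (div_le_one_of_le₀ (by exact_mod_cast hℓn) hn.le)
  have hD2 : |((n - ℓ).descFactorial b : ℝ) / n ^ b| ≤ 1 := by
    rw [abs_of_nonneg (by positivity), div_le_one (by positivity)]
    exact_mod_cast (Nat.descFactorial_le_pow _ _).trans (Nat.pow_le_pow_left (n.sub_le ℓ) _)
  have h1 := abs_div_pow_sub_descFactorial_div_pow_le (x := ℓ) (ℓ - 1) a hn (by positivity)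
    (by exact_mod_cast hℓn) (by exact_mod_cast (by omega : ℓ - 1 ≤ n))
  rw [Nat.cast_sub hℓ1, Nat.cast_one, sub_sub_cancel, abs_one, abs_sub_comm] at h1
  have h2 := abs_div_pow_sub_descFactorial_div_pow_le (x := ((n - ℓ : ℕ) : ℝ)) (n - ℓ) b hn
    (by positivity) (by exact_mod_cast n.sub_le ℓ) (by exact_mod_cast n.sub_le ℓ)
  rw [sub_self, abs_zero, zero_add, abs_sub_comm] at h2
  calc _ ≤ _ := abs_mul_sub_mul_le hD2 hℓa
    _ ≤ _ := add_le_add h1 h2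
    _ = (a * (a + 1) + b * b) / n := by ring

theorem abs_descFactorial_mul_descFactorial_div_descFactorial_sub_le {a b n ℓ : ℕ}
    (htn : a + b + 1 ≤ n) (hℓ1 : 1 ≤ ℓ) (hℓn : ℓ ≤ n) :
    |((ℓ - 1).descFactorial a * (n - ℓ).descFactorial b : ℝ) / n.descFactorial (a + b + 1) -
        ℓ ^ a * ((n - ℓ : ℕ) : ℝ) ^ b / n ^ (a + b + 1)| ≤
      3 * (a + b + 1) ^ (a + b + 3) / n ^ 2 := by
  set t := a + b + 1
  have hn : (0 : ℝ) < n := by norm_cast; omega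
  set u : ℝ := (ℓ - 1).descFactorial a / n ^ a * ((n - ℓ).descFactorial b / n ^ b)
  set v : ℝ := (ℓ / n) ^ a * (((n - ℓ : ℕ) : ℝ) / n) ^ b
  set w : ℝ := n.descFactorial t / n ^ t
  have hu : ((ℓ - 1).descFactorial a * (n - ℓ).descFactorial b : ℝ) / n.descFactorial t =
      u / w / n := by
    simp only [u, w, t, pow_succ, pow_add]
    field_simp
  have hv : (ℓ : ℝ) ^ a * ((n - ℓ : ℕ) : ℝ) ^ b / n ^ t = v / n := by
    simp only [v, t, div_pow, pow_succ, pow_add]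
    field_simp
  have hv1 : |v| ≤ 1 := by
    have hle (m : ℕ) (hm : m ≤ n) : (m : ℝ) / n ≤ 1 :=
      div_le_one_of_le₀ (by exact_mod_cast hm) hn.le
    rw [abs_of_nonneg (by positivity)]
    exact mul_le_one₀ (pow_le_one₀ (by positivity) (hle ℓ hℓn)) (by positivity)
      (pow_le_one₀ (by positivity) (hle _ (n.sub_le ℓ)))
  have hw : 1 / (t : ℝ) ^ t ≤ w := by
    rw [div_le_div_iff₀ (by positivity) (by positivity), one_mul, mul_comm]
    exact_mod_cast pow_le_pow_mul_descFactorial htn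
  have hw0 : 0 < w := lt_of_lt_of_le (by positivity) hw
  have hw1 : |1 - w| ≤ t * t / n := by
    have h := abs_div_pow_sub_descFactorial_div_pow_le (x := n) n t hn hn.le le_rfl le_rfl
    rwa [sub_self, abs_zero, zero_add, div_self hn.ne', one_pow] at h
  have hsum : |u - v| + |1 - w| ≤ 3 * t ^ 2 / n := by
    refine (add_le_add (abs_descFactorial_mul_descFactorial_div_pow_sub_le hℓ1 hℓn) hw1).trans ?_
    rw [← add_div]
    gcongr
    simp only [t]
    push_cast
    nlinarith
  rw [hu, hv, ← sub_div, abs_div, abs_of_pos hn]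
  calc |u / w - v| / n ≤ (|u - v| + |1 - w|) / w / n := by
        gcongr; exact abs_div_sub_le hw0 hv1
    _ ≤ 3 * t ^ 2 / n * t ^ t / n := by
        gcongr
        rw [div_le_iff₀ hw0]
        calc |u - v| + |1 - w| ≤ 3 * t ^ 2 / n := hsum
          _ = 3 * t ^ 2 / n * t ^ t * (1 / t ^ t) := by field_simp
          _ ≤ 3 * t ^ 2 / n * t ^ t * w := by gcongr
    _ = 3 * (a + b + 1) ^ (a + b + 3) / n ^ 2 := by simp only [t]; push_cast; ring

theorem abs_choose_mul_choose_div_choose_sub_PhiST_le {s t n ℓ : ℕ} (hs : 1 ≤ s) (hst : s ≤ t)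
    (htn : t ≤ n) (hℓ1 : 1 ≤ ℓ) (hℓn : ℓ ≤ n) :
    |((ℓ - 1).choose (s - 1) * (n - ℓ).choose (t - s) : ℕ) / (n.choose t : ℝ) -
        1 / n * PhiST s t (ℓ / n)| ≤
      t.factorial / ((s - 1).factorial * (t - s).factorial) * (3 * t ^ (t + 2)) / n ^ 2 := by
  obtain ⟨a, rfl⟩ := Nat.exists_eq_add_of_le' hs
  obtain ⟨b, rfl⟩ := Nat.exists_eq_add_of_le hst
  rw [Nat.add_sub_cancel, Nat.add_sub_cancel_left, add_right_comm a 1 b] at *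
  have hn : (0 : ℝ) < n := by norm_cast; omega
  have hT : 1 / (n : ℝ) * PhiST (a + 1) (a + b + 1) (ℓ / n) =
      (a + b + 1).factorial / (a.factorial * b.factorial) *
        (ℓ ^ a * ((n - ℓ : ℕ) : ℝ) ^ b / n ^ (a + b + 1)) := by
    rw [PhiST, show a + b + 1 - (a + 1) = b by omega, Nat.add_sub_cancel, Nat.cast_sub hℓn,
      one_sub_div hn.ne']
    simp only [div_pow, pow_succ, pow_add]
    field_simp
  rw [choose_mul_choose_div_choose_eq, hT, ← mul_sub, abs_mul, abs_of_pos (by positivity)]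
  refine (mul_le_mul_of_nonneg_left
    (abs_descFactorial_mul_descFactorial_div_descFactorial_sub_le htn hℓ1 hℓn)
    (by positivity)).trans_eq ?_
  push_cast
  ring

theorem discrete_order_statistic_distribution_general (s t : ℕ)
    (hs : 1 ≤ s) (hst : s ≤ t) :
    (∀ n : ℕ, t ≤ n → ∀ ℓ ∈ Finset.Icc 1 n,
      (((((Finset.Icc 1 n).powersetCard t).filter
            (fun Y => nthSmallest Y s = ℓ)).card : ℚ) / (Nat.choose n t : ℚ))
        = ((Nat.choose (ℓ - 1) (s - 1) * Nat.choose (n - ℓ) (t - s) : ℕ) : ℚ) /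
            (Nat.choose n t : ℚ)) ∧
    (∃ C : ℝ, 0 < C ∧ ∀ n : ℕ, t ≤ n → ∀ ℓ : ℕ, 1 ≤ ℓ → ℓ ≤ n →
      |(((((Finset.Icc 1 n).powersetCard t).filter
            (fun Y => nthSmallest Y s = ℓ)).card : ℝ) / (Nat.choose n t : ℝ)) -
          (1 / (n : ℝ)) * PhiST s t ((ℓ : ℝ) / (n : ℝ))|
        ≤ C * (n : ℝ) ^ (-(1.5 : ℝ))) := by
  have ht : (0 : ℝ) < t := by exact_mod_cast hs.trans hst
  refine ⟨fun n _ ℓ hℓ => by rw [card_filter_nthSmallest_eq hs hst hℓ],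
    t.factorial / ((s - 1).factorial * (t - s).factorial) * (3 * t ^ (t + 2)), by positivity,
    fun n htn ℓ hℓ1 hℓn => ?_⟩
  rw [card_filter_nthSmallest_eq hs hst (mem_Icc.2 ⟨hℓ1, hℓn⟩)]
  refine (abs_choose_mul_choose_div_choose_sub_PhiST_le hs hst htn hℓ1 hℓn).trans ?_
  rw [div_eq_mul_inv, ← Real.rpow_natCast (n : ℝ) 2, ← Real.rpow_neg (by positivity)]
  gcongr
  · exact_mod_cast hℓ1.trans hℓn
  · norm_num

/-- Lemma: discrete order statistics approximate the continuous ones.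
Fix `t ≥ 3` and `1 ≤ s ≤ t`. For a uniformly random `t`-element subset of `{1,…,n}`
(`n ≥ t`) with `s`-th smallest element `Y_s`:
`P(Y_s = ℓ) = C(ℓ−1,s−1)·C(n−ℓ,t−s)/C(n,t)` for every `ℓ ∈ {1,…,n}`, and there is a
constant `C > 0` (depending only on `s,t`) with
`| P(Y_s = ℓ) − (1/n)·Φ_s^t(ℓ/n) | ≤ C·n^{−1.5}` for all `n ≥ t`, `1 ≤ ℓ ≤ n`. -/
theorem discrete_order_statistic_distribution (s t : ℕ) (ht : 3 ≤ t)
    (hs : 1 ≤ s) (hst : s ≤ t) :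
    (∀ n : ℕ, t ≤ n → ∀ ℓ ∈ Finset.Icc 1 n,
      (((((Finset.Icc 1 n).powersetCard t).filter
            (fun Y => nthSmallest Y s = ℓ)).card : ℚ) / (Nat.choose n t : ℚ))
        = ((Nat.choose (ℓ - 1) (s - 1) * Nat.choose (n - ℓ) (t - s) : ℕ) : ℚ) /
            (Nat.choose n t : ℚ)) ∧
    (∃ C : ℝ, 0 < C ∧ ∀ n : ℕ, t ≤ n → ∀ ℓ : ℕ, 1 ≤ ℓ → ℓ ≤ n →
      |(((((Finset.Icc 1 n).powersetCard t).filter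
            (fun Y => nthSmallest Y s = ℓ)).card : ℝ) / (Nat.choose n t : ℝ)) -
          (1 / (n : ℝ)) * PhiST s t ((ℓ : ℝ) / (n : ℝ))|
        ≤ C * (n : ℝ) ^ (-(1.5 : ℝ))) :=
  discrete_order_statistic_distribution_general s t hs hst
end
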